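/- arXiv:1511.02888 — 8 statements merged into one kernel-verified Lean document; each statement's English description precedes it below -/
import Mathlib

section
/- If (a_k) and (b_k) are nonnegative log-concave sequences with no internal zeros, then their convolution c_n = Σ_{k} a_k b_{n-k} is log-concave. -/
/-!
Extended by zero to `ℤ`, a nonnegative log-concave sequence without internal zeros is a Pólya
frequency sequence of order two: `a i * a (j + 1) ≤ a (i + 1) * a j` for all `i ≤ j`. Writing
`c n` both as `∑ k, a (k - 1) * b (n + 1 - k)` and as `∑ k, a k * b (n - k)`, the difference
`c n ^ 2 - c (n - 1) * c (n + 1)` becomes a double sum over `(k, l)` whose symmetrized terms are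
products of a minor of `a` and a minor of `b` of the same sign.
-/

open Finset

def zeroExtend {M : Type*} [Zero M] (a : ℕ → M) : ℤ → M
  | (n : ℕ) => a n
  | Int.negSucc _ => 0

section zeroExtend

variable {M : Type*}

@[simp]
theorem zeroExtend_natCast [Zero M] (a : ℕ → M) (n : ℕ) : zeroExtend a n = a n := rfl

theorem zeroExtend_of_neg [Zero M] (a : ℕ → M) {m : ℤ} (hm : m < 0) : zeroExtend a m = 0 := by
  cases m with
  | ofNat n => exact absurd hm (by simp)
  | negSucc n => rfl

theorem zeroExtend_nonneg [Zero M] [Preorder M] {a : ℕ → M} (ha : ∀ k, 0 ≤ a k) (m : ℤ) :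
    0 ≤ zeroExtend a m := by
  cases m with
  | ofNat n => exact ha n
  | negSucc n => exact le_rfl

theorem sum_zeroExtend_mul_zeroExtend [NonUnitalNonAssocSemiring M] (a b : ℕ → M) (m : ℕ)
    (j p : ℤ) (hp : p = m + j) (s : Finset ℤ) (hs : ∀ k ≤ m, (k : ℤ) + j ∈ s) :
    ∑ k ∈ s, zeroExtend a (k - j) * zeroExtend b (p - k) =
      ∑ k ∈ range (m + 1), a k * b (m - k) := by
  have hsub : (range (m + 1)).image (fun k : ℕ => (k : ℤ) + j) ⊆ s := by
    intro x hx
    obtain ⟨k, hk, rfl⟩ := mem_image.1 hx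
    exact hs k (by simpa [Nat.lt_succ_iff] using hk)
  rw [← sum_subset hsub, sum_image fun k _ l _ h => by simpa using h]
  · refine sum_congr rfl fun k hk => ?_
    have hkm : k ≤ m := by simpa [Nat.lt_succ_iff] using hk
    have : p - (k + j) = ((m - k : ℕ) : ℤ) := by omega
    rw [add_sub_cancel_right, this, zeroExtend_natCast, zeroExtend_natCast]
  · intro x _ hx
    rcases lt_or_ge (x - j) 0 with hneg | hnonneg
    · rw [zeroExtend_of_neg a hneg, zero_mul]
    · have hlt : p - x < 0 := by
        by_contra! hge
        exact hx (mem_image.2 ⟨(x - j).toNat, by simp; omega, by omega⟩)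
      rw [zeroExtend_of_neg b hlt, mul_zero]

end zeroExtend

variable {R : Type*} [CommRing R] [LinearOrder R] [IsStrictOrderedRing R]

theorem sum_mul_sum_le_sum_mul_sum_of_pair_nonneg {ι : Type*} (s : Finset ι) (w x y z : ι → R)
    (h : ∀ k ∈ s, ∀ l ∈ s, 0 ≤ (w k * z l - x k * y l) + (w l * z k - x l * y k)) :
    (∑ k ∈ s, x k) * (∑ k ∈ s, y k) ≤ (∑ k ∈ s, w k) * (∑ k ∈ s, z k) := by
  have hsymm : 2 * ((∑ k ∈ s, w k) * (∑ k ∈ s, z k) - (∑ k ∈ s, x k) * (∑ k ∈ s, y k)) =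
      ∑ k ∈ s, ∑ l ∈ s, ((w k * z l - x k * y l) + (w l * z k - x l * y k)) := by
    simp only [sum_add_distrib, sum_sub_distrib, sum_mul_sum]
    rw [sum_comm (f := fun k l => w l * z k), sum_comm (f := fun k l => x l * y k)]
    ring
  have : 0 ≤ ∑ k ∈ s, ∑ l ∈ s, ((w k * z l - x k * y l) + (w l * z k - x l * y k)) :=
    sum_nonneg fun k hk => sum_nonneg fun l hl => h k hk l hl
  linarith

theorem mul_le_mul_of_logConcave {a : ℕ → R} (ha0 : ∀ k, 0 ≤ a k)
    (halc : ∀ k, 1 ≤ k → a (k - 1) * a (k + 1) ≤ a k ^ 2)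
    (haniz : ∀ i j k, i ≤ j → j ≤ k → a i ≠ 0 → a k ≠ 0 → a j ≠ 0)
    {i j : ℕ} (hij : i ≤ j) : a i * a (j + 1) ≤ a (i + 1) * a j := by
  induction j, hij using Nat.le_induction with
  | base => exact (mul_comm _ _).le
  | succ j hij ih =>
    have hlc : a j * a (j + 2) ≤ a (j + 1) ^ 2 := halc (j + 1) (by omega)
    rcases (ha0 (j + 1)).eq_or_lt with hzero | hpos
    · have hends : a i = 0 ∨ a (j + 2) = 0 := by
        by_contra! hne
        exact haniz i (j + 1) (j + 2) (by omega) (by omega) hne.1 hne.2 hzero.symm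
      have : a i * a (j + 2) = 0 := by rcases hends with h | h <;> simp [h]
      rw [this]
      exact mul_nonneg (ha0 _) (ha0 _)
    · refine le_of_mul_le_mul_left ?_ hpos
      calc a (j + 1) * (a i * a (j + 2)) = a i * a (j + 1) * a (j + 2) := by ring
        _ ≤ a (i + 1) * a j * a (j + 2) := mul_le_mul_of_nonneg_right ih (ha0 _)
        _ = a (i + 1) * (a j * a (j + 2)) := by ring
        _ ≤ a (i + 1) * a (j + 1) ^ 2 := mul_le_mul_of_nonneg_left hlc (ha0 _)
        _ = a (j + 1) * (a (i + 1) * a (j + 1)) := by ring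

/-- Pólya frequency of order two: the 2×2 minors of the Toeplitz matrix `(f (i - j))` are
nonnegative. -/
def IsPF2 (f : ℤ → R) : Prop := ∀ i j, i ≤ j → f i * f (j + 1) ≤ f (i + 1) * f j

theorem isPF2_zeroExtend {a : ℕ → R} (ha0 : ∀ k, 0 ≤ a k)
    (halc : ∀ k, 1 ≤ k → a (k - 1) * a (k + 1) ≤ a k ^ 2)
    (haniz : ∀ i j k, i ≤ j → j ≤ k → a i ≠ 0 → a k ≠ 0 → a j ≠ 0) :
    IsPF2 (zeroExtend a) := by
  intro i j hij
  rcases lt_or_ge i 0 with hi | hi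
  · rw [zeroExtend_of_neg a hi, zero_mul]
    exact mul_nonneg (zeroExtend_nonneg ha0 _) (zeroExtend_nonneg ha0 _)
  · lift j to ℕ using hi.trans hij
    lift i to ℕ using hi
    exact_mod_cast mul_le_mul_of_logConcave ha0 halc haniz (by exact_mod_cast hij)

theorem IsPF2.minor_mul_minor_nonneg {f g : ℤ → R} (hf : IsPF2 f) (hg : IsPF2 g) {i j p q : ℤ}
    (h : i ≤ j ∧ p ≤ q ∨ j ≤ i ∧ q ≤ p) :
    0 ≤ (f i * f (j + 1) - f (i + 1) * f j) * (g p * g (q + 1) - g (p + 1) * g q) := by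
  rcases h with ⟨hij, hpq⟩ | ⟨hji, hqp⟩
  · exact mul_nonneg_of_nonpos_of_nonpos (sub_nonpos.2 (hf i j hij)) (sub_nonpos.2 (hg p q hpq))
  · refine mul_nonneg ?_ ?_
    · linarith [hf j i hji]
    · linarith [hg q p hqp]

/-- Once `s` contains the supports, the four sums are `c (n - 1)`, `c (n + 1)`, `c n`, `c n`
for the convolution `c m = ∑ k, f k * g (m - k)`. -/
theorem IsPF2.sum_mul_sum_le {f g : ℤ → R} (hf : IsPF2 f) (hg : IsPF2 g) (s : Finset ℤ) (n : ℤ) :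
    (∑ k ∈ s, f (k - 1) * g (n - k)) * (∑ k ∈ s, f k * g (n + 1 - k)) ≤
      (∑ k ∈ s, f (k - 1) * g (n + 1 - k)) * (∑ k ∈ s, f k * g (n - k)) := by
  refine sum_mul_sum_le_sum_mul_sum_of_pair_nonneg s _ _ _ _ fun k _ l _ => ?_
  -- the symmetrized `(k, l)`-term is this product of minors
  have h := hf.minor_mul_minor_nonneg hg (i := k - 1) (j := l - 1) (p := n - l) (q := n - k)
    (by omega)
  simp only [sub_add_cancel, sub_add_eq_add_sub] at h
  linarith

/-- If `(a_k)` and `(b_k)` are nonnegative log-concave sequences with no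
internal zeros, then their convolution `c_n = Σ_k a_k b_{n-k}` is log-concave. -/
theorem logConcave_convolution (a b : ℕ → ℝ)
    (ha0 : ∀ k, 0 ≤ a k) (hb0 : ∀ k, 0 ≤ b k)
    (halc : ∀ k, 1 ≤ k → a (k - 1) * a (k + 1) ≤ a k ^ 2)
    (hblc : ∀ k, 1 ≤ k → b (k - 1) * b (k + 1) ≤ b k ^ 2)
    (haniz : ∀ i j k, i ≤ j → j ≤ k → a i ≠ 0 → a k ≠ 0 → a j ≠ 0)
    (hbniz : ∀ i j k, i ≤ j → j ≤ k → b i ≠ 0 → b k ≠ 0 → b j ≠ 0) :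
    ∀ n, 1 ≤ n →
      (∑ k ∈ Finset.range n, a k * b (n - 1 - k)) *
        (∑ k ∈ Finset.range (n + 2), a k * b (n + 1 - k)) ≤
      (∑ k ∈ Finset.range (n + 1), a k * b (n - k)) ^ 2 := by
  intro n hn
  let s := Icc (0 : ℤ) (n + 1)
  have hs : ∀ k : ℤ, 0 ≤ k → k ≤ n + 1 → k ∈ s := fun k h₀ h₁ => mem_Icc.2 ⟨h₀, h₁⟩
  have hprev : ∑ k ∈ s, zeroExtend a (k - 1) * zeroExtend b (n - k) =
      ∑ k ∈ range n, a k * b (n - 1 - k) := by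
    have := sum_zeroExtend_mul_zeroExtend a b (n - 1) 1 n (by omega) s
      fun k hk => hs _ (by omega) (by omega)
    rwa [Nat.sub_add_cancel hn] at this
  have hnext : ∑ k ∈ s, zeroExtend a k * zeroExtend b (n + 1 - k) =
      ∑ k ∈ range (n + 2), a k * b (n + 1 - k) := by
    simpa using sum_zeroExtend_mul_zeroExtend a b (n + 1) 0 (n + 1) (by push_cast; ring) s
      fun k hk => hs _ (by omega) (by omega)
  have hcur : ∑ k ∈ s, zeroExtend a (k - 1) * zeroExtend b (n + 1 - k) =
      ∑ k ∈ range (n + 1), a k * b (n - k) :=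
    sum_zeroExtend_mul_zeroExtend a b n 1 (n + 1) rfl s fun k hk => hs _ (by omega) (by omega)
  have hcur' : ∑ k ∈ s, zeroExtend a k * zeroExtend b (n - k) =
      ∑ k ∈ range (n + 1), a k * b (n - k) := by
    simpa using sum_zeroExtend_mul_zeroExtend a b n 0 n (add_zero _).symm s
      fun k hk => hs _ (by omega) (by omega)
  rw [← hprev, ← hnext, sq]
  nth_rewrite 1 [← hcur]
  rw [← hcur']
  exact (isPF2_zeroExtend ha0 halc haniz).sum_mul_sum_le (isPF2_zeroExtend hb0 hblc hbniz) s n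
end

section
/- For the truncation tr(M) of a loopless matroid M of rank r+1, and any nonnegative integer k < r, the k-th coefficient of the reduced characteristic polynomial satisfies μ^k(M) = μ^k(tr(M)). -/
open Finset

/-- A matroid on a finite ground set, given by its rank function. -/
structure FinMatroid (E : Type*) [DecidableEq E] [Fintype E] where
  rk : Finset E → ℕ
  rk_empty : rk ∅ = 0
  rk_le_card : ∀ I, rk I ≤ I.card
  rk_mono : ∀ ⦃I J⦄, I ⊆ J → rk I ≤ rk J
  rk_submodular : ∀ I J, rk (I ∪ J) + rk (I ∩ J) ≤ rk I + rk J

namespace FinMatroid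

variable {E : Type*} [DecidableEq E] [Fintype E]

/-- A matroid is loopless if every singleton has rank one. -/
def Loopless (M : FinMatroid E) : Prop := ∀ e : E, M.rk {e} = 1

/-- A flat of a matroid: a closed set, i.e. adding any new element increases the rank. -/
def IsFlat (M : FinMatroid E) (F : Finset E) : Prop :=
  ∀ e ∉ F, M.rk F < M.rk (insert e F)

/-- The characteristic polynomial `χ_M(λ) = Σ_{I ⊆ E} (-1)^{|I|} λ^{crk I}`. -/
noncomputable def charPoly (M : FinMatroid E) : Polynomial ℤ :=
  ∑ I ∈ (Finset.univ : Finset E).powerset,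
    Polynomial.C ((-1 : ℤ) ^ I.card) * Polynomial.X ^ (M.rk Finset.univ - M.rk I)

/-- The reduced characteristic polynomial `χ̄_M(λ) = χ_M(λ)/(λ-1)`. -/
noncomputable def redCharPoly (M : FinMatroid E) : Polynomial ℤ :=
  M.charPoly /ₘ (Polynomial.X - 1)

end FinMatroid

/-!
Truncating at rank `r` changes the corank `r + 1 - rk I` of a non-spanning set `I` into
`r - rk I`, one less, and gives every spanning set corank `0` in both matroids. Hence
`χ_M = λ χ_{tr M} + (1 - λ) c`, where `c` is the signed count of spanning sets of `M`;
dividing by `λ - 1` gives `χ̄_M = λ χ̄_{tr M} - c`, so the two reduced polynomials agree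
coefficientwise except in the constant term of `χ̄_M`.
-/

open Polynomial

theorem Polynomial.X_pow_sub_eq_X_mul_X_pow_sub_min {R : Type*} [CommRing R] {a r : ℕ}
    (ha : a ≤ r + 1) :
    (X : R[X]) ^ (r + 1 - a) = X * X ^ (r - min a r) + (1 - X) * if a = r + 1 then 1 else 0 := by
  by_cases h : a = r + 1
  · simp [h]
  · rw [if_neg h, min_eq_left (by omega), show r + 1 - a = r - a + 1 by omega]
    ring

namespace FinMatroid

variable {E : Type*} [DecidableEq E] [Fintype E]

theorem charPoly_eval_one (M : FinMatroid E) (hE : (univ : Finset E).Nonempty) :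
    M.charPoly.eval 1 = 0 := by
  simp only [charPoly, eval_finsetSum, eval_mul, eval_C, eval_pow, eval_X, one_pow, mul_one]
  exact sum_powerset_neg_one_pow_card_of_nonempty hE

theorem charPoly_eq_X_sub_one_mul_redCharPoly (M : FinMatroid E)
    (hE : (univ : Finset E).Nonempty) : M.charPoly = (X - 1) * M.redCharPoly := by
  simpa [redCharPoly] using (mul_divByMonic_eq_iff_isRoot (p := M.charPoly) (a := 1)).mpr
    (M.charPoly_eval_one hE) |>.symm

theorem charPoly_eq_of_truncation (M N : FinMatroid E) {r : ℕ} (hrk : M.rk univ = r + 1)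
    (hN : ∀ I, N.rk I = min (M.rk I) r) :
    M.charPoly = X * N.charPoly +
      (1 - X) * C (∑ I ∈ (univ : Finset E).powerset with M.rk I = r + 1, (-1) ^ #I) := by
  have hNuniv : N.rk univ = r := by rw [hN, hrk]; omega
  simp only [charPoly, mul_sum, map_sum, sum_filter, ← sum_add_distrib, hrk, hNuniv, hN]
  refine sum_congr rfl fun I _ => ?_
  rw [X_pow_sub_eq_X_mul_X_pow_sub_min (hrk ▸ M.rk_mono (subset_univ I))]
  split_ifs <;> simp only [map_zero, mul_zero, add_zero, mul_one] <;> ring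

theorem redCharPoly_eq_of_truncation (M N : FinMatroid E) {r : ℕ} (hrk : M.rk univ = r + 1)
    (hN : ∀ I, N.rk I = min (M.rk I) r) :
    M.redCharPoly = X * N.redCharPoly -
      C (∑ I ∈ (univ : Finset E).powerset with M.rk I = r + 1, (-1) ^ #I) := by
  have hE : (univ : Finset E).Nonempty := by
    by_contra h
    rw [not_nonempty_iff_eq_empty.mp h, M.rk_empty] at hrk
    omega
  rw [redCharPoly, charPoly_eq_of_truncation M N hrk hN,
    N.charPoly_eq_X_sub_one_mul_redCharPoly hE,
    show ∀ p q : ℤ[X], X * ((X - 1) * p) + (1 - X) * q = (X - 1) * (X * p - q) by intros; ring,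
    mul_divByMonic_cancel_left _ (by simpa using monic_X_sub_C (1 : ℤ))]

end FinMatroid

theorem truncation_mu_eq_general {E : Type*} [DecidableEq E] [Fintype E]
    (M N : FinMatroid E) (r : ℕ)
    (hrk : M.rk Finset.univ = r + 1)
    (hN : ∀ I, N.rk I = min (M.rk I) r) :
    ∀ k < r, M.redCharPoly.coeff (r - k) = N.redCharPoly.coeff (r - 1 - k) := by
  intro k hk
  rw [M.redCharPoly_eq_of_truncation N hrk hN, coeff_sub, coeff_C, if_neg (by omega), sub_zero,
    show r - k = r - 1 - k + 1 by omega, coeff_X_mul]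

/-- For the truncation `tr(M)` (the matroid with rank function
`I ↦ min (rk_M I) r`) of a loopless matroid `M` of rank `r+1 ≥ 2`, and any `k < r`,
the `k`-th coefficient of the reduced characteristic polynomial is unchanged:
`μ^k(M) = μ^k(tr(M))`.  Since `χ̄_M` has degree `r` and `χ̄_{tr(M)}` has degree `r-1`,
this says that the coefficient of `λ^{r-k}` in `χ̄_M` equals the coefficient of
`λ^{(r-1)-k}` in `χ̄_{tr(M)}`. -/
theorem truncation_mu_eq {E : Type*} [DecidableEq E] [Fintype E]
    (M N : FinMatroid E) (r : ℕ) (hr : 1 ≤ r)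
    (hM : M.Loopless) (hrk : M.rk Finset.univ = r + 1)
    (hN : ∀ I, N.rk I = min (M.rk I) r) :
    ∀ k < r, M.redCharPoly.coeff (r - k) = N.redCharPoly.coeff (r - 1 - k) :=
  truncation_mu_eq_general M N r hrk hN
end

section
/- All coefficients μ^k(M) of the reduced characteristic polynomial of a loopless matroid are positive; equivalently, the absolute values of the coefficients of χ̄_M(λ) alternate in sign and are nonzero. -/
open Finset

/-! Induction on the ground set by deletion–contraction, carrying the factorisation
`χ = (λ - 1) q` with the coefficients of `q` strictly alternating. If `e` is a coloop then
`χ_M = (λ - 1) χ_{M∖e}`, and multiplying by `λ - 1` preserves strict alternation. Otherwise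
`χ_M = χ_{M∖e} - χ_{M/e}`: the contraction has rank one less, so subtracting its reduced
polynomial adds to every alternating coefficient but the leading one, unless `M/e` has a loop,
in which case `χ_{M/e} = 0`. -/

open Polynomial

namespace Polynomial

variable {R : Type*} [CommRing R] [LinearOrder R] [IsStrictOrderedRing R]

def IsStrictlyAlternating (p : R[X]) (n : ℕ) : Prop :=
  p.natDegree ≤ n ∧ ∀ k ≤ n, 0 < (-1) ^ k * p.coeff (n - k)

theorem isStrictlyAlternating_one : IsStrictlyAlternating (1 : R[X]) 0 := by
  refine ⟨by simp, fun k hk => ?_⟩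
  obtain rfl : k = 0 := by omega
  simp

theorem IsStrictlyAlternating.sub {p q : R[X]} {n : ℕ} (hp : p.IsStrictlyAlternating (n + 1))
    (hq : q.IsStrictlyAlternating n) : (p - q).IsStrictlyAlternating (n + 1) := by
  refine ⟨(natDegree_sub_le p q).trans (max_le hp.1 (hq.1.trans n.le_succ)), ?_⟩
  rintro (_ | k) hk
  · simpa [coeff_eq_zero_of_natDegree_lt (hq.1.trans_lt n.lt_succ_self)]
      using hp.2 0 (Nat.zero_le _)
  · have hpk := hp.2 (k + 1) hk
    have hqk := hq.2 k (by omega)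
    rw [Nat.add_sub_add_right] at hpk ⊢
    calc (0 : R) < (-1) ^ (k + 1) * p.coeff (n - k) + (-1) ^ k * q.coeff (n - k) :=
          add_pos hpk hqk
      _ = (-1) ^ (k + 1) * (p - q).coeff (n - k) := by rw [coeff_sub]; ring

theorem IsStrictlyAlternating.X_sub_one_mul {p : R[X]} {n : ℕ}
    (hp : p.IsStrictlyAlternating n) : ((X - 1) * p).IsStrictlyAlternating (n + 1) := by
  refine ⟨(natDegree_mul_le).trans ?_, ?_⟩
  · have : (X - 1 : R[X]).natDegree ≤ 1 := by
      simpa using natDegree_X_sub_C_le (1 : R)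
    have := hp.1
    omega
  rintro (_ | k) hk
  · simpa [sub_mul, coeff_X_mul, coeff_eq_zero_of_natDegree_lt (hp.1.trans_lt n.lt_succ_self)]
      using hp.2 0 (Nat.zero_le _)
  · rw [Nat.add_sub_add_right]
    have hXp : 0 ≤ (-1) ^ (k + 1) * (X * p).coeff (n - k) := by
      rcases Nat.lt_or_ge k n with hkn | hkn
      · obtain ⟨m, hm⟩ : ∃ m, n - k = m + 1 := ⟨n - k - 1, by omega⟩
        have := hp.2 (k + 1) hkn
        rw [hm, coeff_X_mul]
        rw [show n - (k + 1) = m by omega] at this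
        exact this.le
      · simp [show n - k = 0 by omega]
    have hcoeff : ((X - 1) * p).coeff (n - k) = (X * p).coeff (n - k) - p.coeff (n - k) := by
      rw [sub_mul, one_mul, coeff_sub]
    rw [hcoeff, show ∀ a b : R, (-1) ^ (k + 1) * (a - b) = (-1) ^ (k + 1) * a + (-1) ^ k * b by
      intros; ring]
    exact add_pos_of_nonneg_of_pos hXp (hp.2 k (by omega))

end Polynomial

namespace FinMatroid

variable {E : Type*} [DecidableEq E] [Fintype E]

theorem rk_insert_le (M : FinMatroid E) (e : E) (I : Finset E) :
    M.rk (insert e I) ≤ M.rk I + M.rk {e} := by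
  have hsub := M.rk_submodular I {e}
  rw [union_comm, ← insert_eq] at hsub
  omega

def contract (M : FinMatroid E) (e : E) : FinMatroid E where
  rk I := M.rk (insert e I) - M.rk {e}
  rk_empty := by simp
  rk_le_card I := by
    have := M.rk_insert_le e I
    have := M.rk_le_card I
    omega
  rk_mono I J hIJ := Nat.sub_le_sub_right (M.rk_mono (insert_subset_insert e hIJ)) _
  rk_submodular I J := by
    have h := M.rk_submodular (insert e I) (insert e J)
    rw [← insert_union_distrib, ← insert_inter_distrib] at h
    have := M.rk_mono (singleton_subset_iff.2 (mem_insert_self e (I ∩ J)))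
    have := M.rk_mono (singleton_subset_iff.2 (mem_insert_self e (I ∪ J)))
    omega

-- `χ` of the restriction `M | G`, so that deleting `e` is passing to `G.erase e`.
noncomputable def charPolyOn (M : FinMatroid E) (G : Finset E) : ℤ[X] :=
  ∑ I ∈ G.powerset, C ((-1 : ℤ) ^ I.card) * X ^ (M.rk G - M.rk I)

theorem charPolyOn_empty (M : FinMatroid E) : M.charPolyOn ∅ = 1 := by
  simp [charPolyOn]

theorem charPolyOn_eq_sum_add_sum (M : FinMatroid E) {G : Finset E} {e : E} (he : e ∈ G) :
    M.charPolyOn G = ∑ I ∈ (G.erase e).powerset,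
      (C ((-1 : ℤ) ^ I.card) * X ^ (M.rk G - M.rk I)
        - C ((-1 : ℤ) ^ I.card) * X ^ (M.rk G - M.rk (insert e I))) := by
  rw [charPolyOn, ← insert_erase he, sum_powerset_insert (notMem_erase e G), insert_erase he,
    ← sum_add_distrib]
  refine sum_congr rfl fun I hI => ?_
  have heI : e ∉ I := fun h => notMem_erase e G (mem_powerset.1 hI h)
  rw [card_insert_of_notMem heI, pow_succ]
  simp only [map_mul, map_neg, map_one]
  ring

theorem charPolyOn_eq_zero_of_loop (M : FinMatroid E) {G : Finset E} {f : E} (hf : f ∈ G)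
    (hloop : M.rk {f} = 0) : M.charPolyOn G = 0 := by
  rw [M.charPolyOn_eq_sum_add_sum hf]
  refine sum_eq_zero fun I _ => ?_
  have := M.rk_insert_le f I
  have := M.rk_mono (subset_insert f I)
  rw [show M.rk (insert f I) = M.rk I by omega, sub_self]

theorem charPolyOn_eq_sub_contract (M : FinMatroid E) {G : Finset E} {e : E} (he : e ∈ G)
    (hrk : M.rk (G.erase e) = M.rk G) :
    M.charPolyOn G = M.charPolyOn (G.erase e) - (M.contract e).charPolyOn (G.erase e) := by
  rw [M.charPolyOn_eq_sum_add_sum he, charPolyOn, charPolyOn, ← sum_sub_distrib]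
  refine sum_congr rfl fun I hI => ?_
  have hIG : insert e I ⊆ G := insert_subset he ((mem_powerset.1 hI).trans (erase_subset e G))
  have := M.rk_mono hIG
  have := M.rk_mono (singleton_subset_iff.2 (mem_insert_self e I))
  have hexp : M.rk G - M.rk (insert e I) = (M.contract e).rk (G.erase e) - (M.contract e).rk I := by
    change _ = M.rk (insert e (G.erase e)) - M.rk {e} - (M.rk (insert e I) - M.rk {e})
    rw [insert_erase he]
    omega
  rw [hrk, hexp]

theorem charPolyOn_eq_X_sub_one_mul (M : FinMatroid E) {G : Finset E} {e : E} (he : e ∈ G)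
    (hrk : M.rk (G.erase e) + 1 = M.rk G) :
    M.charPolyOn G = (X - 1) * M.charPolyOn (G.erase e) := by
  rw [M.charPolyOn_eq_sum_add_sum he, charPolyOn, mul_sum]
  refine sum_congr rfl fun I hI => ?_
  have hIG : I ⊆ G.erase e := mem_powerset.1 hI
  -- submodularity for `insert e I` and `G.erase e` makes `e` a coloop of `M | insert e I`
  have hsub := M.rk_submodular (insert e I) (G.erase e)
  rw [insert_union, union_eq_right.2 hIG, insert_erase he,
    insert_inter_of_notMem (notMem_erase e G), inter_eq_left.2 hIG] at hsub
  have := M.rk_insert_le e I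
  have := M.rk_le_card {e}
  have := M.rk_mono hIG
  rw [card_singleton] at *
  rw [show M.rk G - M.rk I = M.rk (G.erase e) - M.rk I + 1 by omega,
    show M.rk G - M.rk (insert e I) = M.rk (G.erase e) - M.rk I by omega, pow_succ]
  ring

def ReducedCharPolyAlternates (M : FinMatroid E) (G : Finset E) : Prop :=
  ∃ q, M.charPolyOn G = (X - 1) * q ∧ q.IsStrictlyAlternating (M.rk G - 1)

variable {M : FinMatroid E} {G : Finset E} {e : E}

theorem reducedCharPolyAlternates_of_erase_eq_empty (he : e ∈ G) (hrk : M.rk {e} = 1)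
    (hempty : G.erase e = ∅) : M.ReducedCharPolyAlternates G := by
  obtain rfl : G = {e} := by rw [← insert_erase he, hempty]; rfl
  refine ⟨1, ?_, by simpa [hrk] using isStrictlyAlternating_one⟩
  rw [M.charPolyOn_eq_X_sub_one_mul he (by simp [hrk, M.rk_empty]), erase_singleton,
    charPolyOn_empty]

theorem ReducedCharPolyAlternates.of_coloop (he : e ∈ G)
    (hrk : M.rk (G.erase e) + 1 = M.rk G) (hpos : 1 ≤ M.rk (G.erase e))
    (h : M.ReducedCharPolyAlternates (G.erase e)) : M.ReducedCharPolyAlternates G := by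
  obtain ⟨q, hq, halt⟩ := h
  refine ⟨(X - 1) * q, by rw [M.charPolyOn_eq_X_sub_one_mul he hrk, hq], ?_⟩
  rw [show M.rk G - 1 = M.rk (G.erase e) - 1 + 1 by omega]
  exact halt.X_sub_one_mul

theorem ReducedCharPolyAlternates.of_contract_loop {g : E} (he : e ∈ G)
    (hrk : M.rk (G.erase e) = M.rk G) (hg : g ∈ G.erase e) (hloop : (M.contract e).rk {g} = 0)
    (h : M.ReducedCharPolyAlternates (G.erase e)) : M.ReducedCharPolyAlternates G := by
  obtain ⟨q, hq, halt⟩ := h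
  refine ⟨q, ?_, hrk ▸ halt⟩
  rw [M.charPolyOn_eq_sub_contract he hrk, (M.contract e).charPolyOn_eq_zero_of_loop hg hloop,
    sub_zero, hq]

theorem ReducedCharPolyAlternates.of_delete_contract (he : e ∈ G) (he_rk : M.rk {e} = 1)
    (hrk : M.rk (G.erase e) = M.rk G) (hpos : 1 ≤ (M.contract e).rk (G.erase e))
    (hdel : M.ReducedCharPolyAlternates (G.erase e))
    (hcon : (M.contract e).ReducedCharPolyAlternates (G.erase e)) :
    M.ReducedCharPolyAlternates G := by
  obtain ⟨q₁, hq₁, halt₁⟩ := hdel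
  obtain ⟨q₂, hq₂, halt₂⟩ := hcon
  refine ⟨q₁ - q₂, by rw [M.charPolyOn_eq_sub_contract he hrk, hq₁, hq₂, mul_sub], ?_⟩
  have hrkc : (M.contract e).rk (G.erase e) = M.rk G - 1 := by
    change M.rk (insert e (G.erase e)) - M.rk {e} = _
    rw [insert_erase he, he_rk]
  rw [hrkc] at halt₂ hpos
  rw [hrk, show M.rk G - 1 = M.rk G - 1 - 1 + 1 by omega] at halt₁
  rw [show M.rk G - 1 = M.rk G - 1 - 1 + 1 by omega]
  exact halt₁.sub halt₂

theorem reducedCharPolyAlternates_of_loopless (M : FinMatroid E) (hG : G.Nonempty)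
    (hloopless : ∀ e ∈ G, M.rk {e} = 1) : M.ReducedCharPolyAlternates G := by
  induction G using Finset.strongInduction generalizing M with
  | H G ih =>
  obtain ⟨e, he⟩ := hG
  rcases (G.erase e).eq_empty_or_nonempty with hempty | ⟨f, hf⟩
  · exact reducedCharPolyAlternates_of_erase_eq_empty he (hloopless e he) hempty
  have hlt := erase_ssubset he
  have hdel := ih _ hlt M ⟨f, hf⟩ fun g hg => hloopless g (mem_of_mem_erase hg)
  have hrk_le := M.rk_mono (erase_subset e G)
  have hrk_ge : M.rk G ≤ M.rk (G.erase e) + 1 := by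
    simpa [insert_erase he, hloopless e he] using M.rk_insert_le e (G.erase e)
  rcases hrk_le.lt_or_eq with hcoloop | hrk
  · have hpos := hloopless f (mem_of_mem_erase hf) ▸ M.rk_mono (singleton_subset_iff.2 hf)
    exact hdel.of_coloop he (by omega) hpos
  by_cases hcontract : ∀ g ∈ G.erase e, (M.contract e).rk {g} = 1
  · have hpos := hcontract f hf ▸ (M.contract e).rk_mono (singleton_subset_iff.2 hf)
    exact hdel.of_delete_contract he (hloopless e he) hrk hpos
      (ih _ hlt (M.contract e) ⟨f, hf⟩ hcontract)
  · obtain ⟨g, hg, hg_ne⟩ := not_forall₂.1 hcontract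
    have := (M.contract e).rk_le_card {g}
    rw [card_singleton] at this
    exact hdel.of_contract_loop he hrk hg (by omega)

end FinMatroid

/-- All coefficients `μ^k(M)` of the reduced characteristic polynomial
`χ̄_M(λ) = Σ_{k=0}^r (-1)^k μ^k(M) λ^{r-k}` of a loopless matroid of rank `r+1` are
positive; i.e. the coefficients of `χ̄_M` alternate in sign and are nonzero. -/
theorem mu_pos {E : Type*} [DecidableEq E] [Fintype E]
    (M : FinMatroid E) (r : ℕ) (hM : M.Loopless) (hrk : M.rk Finset.univ = r + 1) :
    ∀ k ≤ r, 0 < (-1 : ℤ) ^ k * M.redCharPoly.coeff (r - k) := by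
  have huniv : (Finset.univ : Finset E).Nonempty := by
    by_contra h
    rw [not_nonempty_iff_eq_empty.1 h, M.rk_empty] at hrk
    omega
  obtain ⟨q, hq, halt⟩ := M.reducedCharPolyAlternates_of_loopless huniv fun e _ => hM e
  have hred : M.redCharPoly = q := by
    rw [FinMatroid.redCharPoly, FinMatroid.charPoly, ← FinMatroid.charPolyOn, hq]
    exact mul_divByMonic_cancel_left q (by simpa using monic_X_sub_C (1 : ℤ))
  rw [hrk, Nat.add_sub_cancel] at halt
  exact hred ▸ halt.2
end

section
/- For positive integers k ≤ r, the coefficient μ^k(M) of the reduced characteristic polynomial equals the number of initial descending k-step flags of nonempty proper flats of M, i.e., flags F_1 ⊊ F_2 ⊊ ⋯ ⊊ F_k with rk(F_m) = m for all m and min(F_1) > min(F_2) > ⋯ > min(F_k) > 0. -/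
open Finset

/-!
By Whitney's broken circuit theorem, `χ_M` is a signed count of NBC sets (sets containing no
broken circuit): toggling the least element spanned by the larger elements of a set is a
sign-reversing, rank-preserving involution on the other sets, and NBC sets are independent.
Since `0` is never spanned by larger elements, NBC sets come in pairs `S`, `S ∪ {0}` with
`0 ∉ S`, so `χ̄_M = χ_M / (λ - 1)` is the signed count of NBC sets avoiding `0`, and `μ^k(M)` is
the number of those of size `k`. Listing such a set decreasingly as `e_1 > ⋯ > e_k`, the closures
`F_m` of the initial segments `{e_1, …, e_m}` form an initial descending flag with
`min F_m = e_m`; conversely the minima of an initial descending flag form an NBC set avoiding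
`0` whose initial segments span the flag.
-/

namespace Finset

section Toggle

variable {α β : Type*} [DecidableEq α] {S : Finset α} {x : α}

def toggle (S : Finset α) (x : α) : Finset α := if x ∈ S then S.erase x else insert x S

theorem toggle_toggle (S : Finset α) (x : α) : (S.toggle x).toggle x = S := by
  unfold toggle
  by_cases hx : x ∈ S
  · rw [if_pos hx, if_neg (notMem_erase x S), insert_erase hx]
  · rw [if_neg hx, if_pos (mem_insert_self x S), erase_insert hx]

theorem mem_toggle_self : x ∈ S.toggle x ↔ x ∉ S := by
  unfold toggle
  split_ifs with hx <;> simp [hx]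

theorem toggle_ne (S : Finset α) (x : α) : S.toggle x ≠ S := fun h =>
  iff_not_self (h ▸ mem_toggle_self (S := S) (x := x))

theorem neg_one_pow_card_toggle {R : Type*} [Ring R] (S : Finset α) (x : α) :
    (-1 : R) ^ #(S.toggle x) = -(-1) ^ #S := by
  unfold toggle
  split_ifs with hx
  · rw [← card_erase_add_one hx, pow_succ, mul_neg_one, neg_neg]
  · rw [card_insert_of_notMem hx, pow_succ, mul_neg_one]

theorem filter_toggle_of_not {p : α → Prop} [DecidablePred p] (hx : ¬ p x) :
    (S.toggle x).filter p = S.filter p := by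
  unfold toggle
  split_ifs
  · rw [filter_erase, erase_eq_of_notMem fun h => hx (mem_filter.1 h).2]
  · rw [filter_insert, if_neg hx]

theorem filter_toggle_of_pos {p : α → Prop} [DecidablePred p] (hx : p x) :
    (S.toggle x).filter p = (S.filter p).toggle x := by
  unfold toggle
  by_cases h : x ∈ S
  · rw [if_pos h, if_pos (mem_filter.2 ⟨h, hx⟩), filter_erase]
  · rw [if_neg h, if_neg fun h' => h (mem_filter.1 h').1, filter_insert, if_pos hx]

theorem apply_toggle_eq (f : Finset α → β) (h : f (insert x (S.erase x)) = f (S.erase x)) :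
    f (S.toggle x) = f S := by
  unfold toggle
  split_ifs with hx
  · rw [← h, insert_erase hx]
  · rwa [erase_eq_of_notMem hx] at h

end Toggle

theorem natCard_strictAnti_eq_card {α : Type*} [LinearOrder α] [Fintype α] {k : ℕ}
    (p : Finset α → Prop) [DecidablePred p] :
    Nat.card {e : Fin k → α // StrictAnti e ∧ p (univ.image e)} = #{S | #S = k ∧ p S} := by
  have himage : ∀ (S : Finset α) (h : #S = k),
      univ.image (fun m : Fin k => S.orderEmbOfFin h m.rev) = S := fun S h => by
    change univ.image (S.orderEmbOfFin h ∘ Fin.revPerm) = S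
    rw [← image_image, image_univ_equiv, image_orderEmbOfFin_univ]
  have hcard : ∀ e : Fin k → α, StrictAnti e → #(univ.image e) = k := fun e he =>
    (card_image_of_injective _ he.injective).trans (card_fin k)
  rw [← Nat.card_eq_finsetCard]
  refine Nat.card_congr
    { toFun := fun e => ⟨univ.image e.1,
        mem_filter.2 ⟨mem_univ _, hcard _ e.2.1, e.2.2⟩⟩
      invFun := fun S => ⟨fun m => S.1.orderEmbOfFin (mem_filter.1 S.2).2.1 m.rev,
        fun a b hab => (S.1.orderEmbOfFin _).strictMono (Fin.rev_lt_rev.2 hab),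
        (himage _ _).symm ▸ (mem_filter.1 S.2).2.2⟩
      left_inv := fun e => Subtype.ext <| funext fun m => ?_
      right_inv := fun S => Subtype.ext (himage _ _) }
  have := orderEmbOfFin_unique (hcard _ e.2.1) (f := fun m => e.1 m.rev)
    (fun m => mem_image_of_mem _ (mem_univ _)) (fun a b hab => e.2.1 (Fin.rev_lt_rev.2 hab))
  simpa using (congrFun this m.rev).symm

end Finset

namespace FinMatroid

section Closure

variable {E : Type*} [DecidableEq E] [Fintype E] {M : FinMatroid E} {S T F : Finset E} {x : E}

variable (M) in
def closure (S : Finset E) : Finset E := {x | M.rk (insert x S) = M.rk S}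

theorem mem_closure : x ∈ M.closure S ↔ M.rk (insert x S) = M.rk S := by
  simp [closure]

variable (M) in
theorem subset_closure (S : Finset E) : S ⊆ M.closure S := fun _ hx =>
  mem_closure.2 (by rw [insert_eq_self.2 hx])

variable (M) in
theorem rk_insert_le_add_one (S : Finset E) (x : E) : M.rk (insert x S) ≤ M.rk S + 1 := by
  have h := M.rk_submodular {x} S
  have hx : M.rk {x} ≤ 1 := (M.rk_le_card _).trans (card_singleton x).le
  rw [← insert_eq] at h
  omega

theorem rk_insert_of_notMem_closure (h : x ∉ M.closure S) :
    M.rk (insert x S) = M.rk S + 1 := by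
  have hle := M.rk_insert_le_add_one S x
  have hge := M.rk_mono (subset_insert x S)
  have hne : M.rk (insert x S) ≠ M.rk S := fun h' => h (mem_closure.2 h')
  omega

theorem closure_mono (hST : S ⊆ T) : M.closure S ⊆ M.closure T := by
  intro x hx
  rw [mem_closure] at hx ⊢
  have hsub := M.rk_submodular (insert x S) T
  rw [insert_union, union_eq_right.2 hST, hx] at hsub
  have hS : M.rk S ≤ M.rk (insert x S ∩ T) :=
    M.rk_mono (subset_inter (subset_insert x S) hST)
  have hT := M.rk_mono (subset_insert x T)
  omega

theorem rk_union_of_subset_closure (h : T ⊆ M.closure S) : M.rk (S ∪ T) = M.rk S := by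
  induction T using Finset.induction with
  | empty => rw [union_empty]
  | insert a T _ ih =>
    have hT : M.rk (S ∪ T) = M.rk S := ih ((subset_insert a T).trans h)
    have ha : a ∈ M.closure (S ∪ T) :=
      closure_mono subset_union_left (h (mem_insert_self a T))
    rw [union_insert, mem_closure.1 ha, hT]

theorem rk_closure (S : Finset E) : M.rk (M.closure S) = M.rk S := by
  rw [← union_eq_right.2 (subset_closure M S), rk_union_of_subset_closure subset_rfl]

theorem isFlat_closure (S : Finset E) : M.IsFlat (M.closure S) := by
  intro x hx
  have hS : M.rk (insert x S) = M.rk S + 1 :=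
    rk_insert_of_notMem_closure hx
  have := M.rk_mono (insert_subset_insert x (subset_closure M S))
  rw [rk_closure]
  omega

theorem IsFlat.closure_subset (hF : M.IsFlat F) (hSF : S ⊆ F) : M.closure S ⊆ F := by
  intro x hx
  by_contra hxF
  exact (hF x hxF).ne' (mem_closure.1 (closure_mono hSF hx))

theorem IsFlat.closure_eq_of_rk_eq (hF : M.IsFlat F) (hSF : S ⊆ F) (hrk : M.rk S = M.rk F) :
    M.closure S = F := by
  refine (hF.closure_subset hSF).antisymm fun x hx => mem_closure.2 ?_
  exact le_antisymm (hrk ▸ M.rk_mono (insert_subset hx hSF)) (M.rk_mono (subset_insert x S))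

theorem closure_insert_of_mem (h : x ∈ M.closure S) : M.closure (insert x S) = M.closure S :=
  ((isFlat_closure S).closure_subset (insert_subset h (subset_closure M S))).antisymm
    (closure_mono (subset_insert x S))

theorem Loopless.notMem_closure_empty (hM : M.Loopless) (x : E) : x ∉ M.closure ∅ := by
  rw [mem_closure, insert_empty, hM x, M.rk_empty]
  exact one_ne_zero

end Closure

section BrokenCircuits

variable {E : Type*} [LinearOrder E] [Fintype E] {M : FinMatroid E} {S T : Finset E} {x y : E}

variable (M) in
/-- `x` is a broken point of `S` when the elements of `S` above `x` span `x`, i.e. when `S`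
contains a broken circuit `C \ {x}` with `x = min C`. -/
def brokenPoints (S : Finset E) : Finset E := {x | x ∈ M.closure {y ∈ S | x < y}}

variable (M) in
def IsNBC (S : Finset E) : Prop := M.brokenPoints S = ∅

instance (S : Finset E) : Decidable (M.IsNBC S) :=
  inferInstanceAs (Decidable (M.brokenPoints S = ∅))

theorem not_isNBC_iff : ¬ M.IsNBC S ↔ (M.brokenPoints S).Nonempty :=
  nonempty_iff_ne_empty.symm

theorem mem_brokenPoints : x ∈ M.brokenPoints S ↔ x ∈ M.closure {y ∈ S | x < y} := by
  simp [brokenPoints]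

theorem brokenPoints_mono (hST : S ⊆ T) : M.brokenPoints S ⊆ M.brokenPoints T := fun _ hx =>
  mem_brokenPoints.2 (closure_mono (filter_subset_filter _ hST) (mem_brokenPoints.1 hx))

theorem IsNBC.subset (hT : M.IsNBC T) (hST : S ⊆ T) : M.IsNBC S :=
  subset_empty.1 (hT ▸ brokenPoints_mono hST)

theorem IsNBC.notMem_closure (hS : M.IsNBC S) (x : E) : x ∉ M.closure {y ∈ S | x < y} :=
  fun hx => notMem_empty x (hS ▸ mem_brokenPoints.2 hx)

theorem IsNBC.rk_eq_card (hS : M.IsNBC S) : M.rk S = #S := by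
  induction S using Finset.induction_on_min with
  | empty => exact M.rk_empty
  | insert a S hlt ih =>
    have haS : a ∉ S := fun ha => lt_irrefl a (hlt a ha)
    have hfilter : {y ∈ insert a S | a < y} = S := by
      rw [filter_insert, if_neg (lt_irrefl a), filter_true_of_mem hlt]
    have ha : a ∉ M.closure S := hfilter ▸ hS.notMem_closure a
    rw [rk_insert_of_notMem_closure ha, ih (hS.subset (subset_insert a S)),
      card_insert_of_notMem haS]

theorem mem_brokenPoints_toggle_iff_of_le (hx : x ∈ M.brokenPoints S) (hyx : y ≤ x) :
    y ∈ M.brokenPoints (S.toggle x) ↔ y ∈ M.brokenPoints S := by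
  rw [mem_brokenPoints, mem_brokenPoints]
  rcases hyx.lt_or_eq with hyx | rfl
  · have hxT : x ∈ M.closure ({z ∈ S | y < z}.erase x) := by
      refine closure_mono (fun z hz => ?_) (mem_brokenPoints.1 hx)
      rw [mem_filter] at hz
      exact mem_erase.2 ⟨hz.2.ne', mem_filter.2 ⟨hz.1, hyx.trans hz.2⟩⟩
    rw [filter_toggle_of_pos hyx]
    exact Eq.to_iff (congrArg (y ∈ ·) (apply_toggle_eq M.closure (closure_insert_of_mem hxT)))
  · rw [filter_toggle_of_not (lt_irrefl y)]

theorem isLeast_brokenPoints_toggle (hx : IsLeast (M.brokenPoints S : Set E) x) :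
    IsLeast (M.brokenPoints (S.toggle x) : Set E) x := by
  refine ⟨(mem_brokenPoints_toggle_iff_of_le hx.1 le_rfl).2 hx.1, fun y hy => ?_⟩
  by_contra! hyx
  exact (hx.2 ((mem_brokenPoints_toggle_iff_of_le hx.1 hyx.le).1 hy)).not_gt hyx

theorem rk_toggle_of_mem_brokenPoints (hx : x ∈ M.brokenPoints S) :
    M.rk (S.toggle x) = M.rk S := by
  refine apply_toggle_eq M.rk (mem_closure.1 (closure_mono (fun z hz => ?_)
    (mem_brokenPoints.1 hx)))
  exact mem_erase.2 ⟨(mem_filter.1 hz).2.ne', (mem_filter.1 hz).1⟩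

theorem sum_neg_one_pow_card_mul_rk_not_isNBC {R : Type*} [CommRing R] (g : ℕ → R) :
    ∑ S with ¬ M.IsNBC S, (-1 : R) ^ #S * g (M.rk S) = 0 := by
  have hne : ∀ S ∈ ({S | ¬ M.IsNBC S} : Finset (Finset E)), (M.brokenPoints S).Nonempty :=
    fun S hS => not_isNBC_iff.1 (mem_filter.1 hS).2
  have hleast : ∀ S hS,
      IsLeast (M.brokenPoints (S.toggle ((M.brokenPoints S).min' (hne S hS))))
        ((M.brokenPoints S).min' (hne S hS)) :=
    fun S hS => isLeast_brokenPoints_toggle (isLeast_min' _ _)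
  refine sum_involution (fun S hS => S.toggle ((M.brokenPoints S).min' (hne S hS)))
    (fun S hS => ?_) (fun S _ _ => toggle_ne _ _) (fun S hS => ?_) (fun S hS => ?_)
  · rw [rk_toggle_of_mem_brokenPoints (min'_mem _ _), neg_one_pow_card_toggle]
    ring
  · exact mem_filter.2 ⟨mem_univ _, not_isNBC_iff.2 ⟨_, (hleast S hS).1⟩⟩
  · rw [(isLeast_min' _ _).unique (hleast S hS), toggle_toggle]

end BrokenCircuits

section CharPoly

open Polynomial

variable {E : Type*} [LinearOrder E] [Fintype E] {M : FinMatroid E} {S : Finset E} {r k : ℕ}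

theorem charPoly_eq_sum_isNBC :
    M.charPoly = ∑ S with M.IsNBC S, (-1) ^ #S * X ^ (M.rk univ - #S) := calc
  M.charPoly = ∑ S, (-1) ^ #S * X ^ (M.rk univ - M.rk S) := by simp [charPoly]
  _ = ∑ S with M.IsNBC S, (-1) ^ #S * X ^ (M.rk univ - M.rk S) := by
    rw [← sum_filter_add_sum_filter_not univ M.IsNBC,
      sum_neg_one_pow_card_mul_rk_not_isNBC (fun j => X ^ (M.rk univ - j)), add_zero]
  _ = _ := sum_congr rfl fun S hS => by rw [(mem_filter.1 hS).2.rk_eq_card]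

variable [OrderBot E]

theorem isNBC_insert_bot_iff : M.IsNBC (insert ⊥ S) ↔ M.IsNBC S := by
  have hfilter : ∀ x : E, {y ∈ insert ⊥ S | x < y} = {y ∈ S | x < y} := fun x => by
    rw [filter_insert, if_neg not_lt_bot]
  simp only [IsNBC, brokenPoints, hfilter]

theorem IsNBC.card_lt_rk_univ (hS : M.IsNBC S) (hbot : ⊥ ∉ S) : #S < M.rk univ := calc
  #S < #(insert ⊥ S) := by rw [card_insert_of_notMem hbot]; exact Nat.lt_succ_self _
  _ = M.rk (insert ⊥ S) := (isNBC_insert_bot_iff.2 hS).rk_eq_card.symm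
  _ ≤ M.rk univ := M.rk_mono (subset_univ _)

theorem sum_isNBC_eq_sum_bot_notMem {β : Type*} [AddCommMonoid β] (f : Finset E → β) :
    ∑ S with M.IsNBC S, f S = ∑ S with M.IsNBC S ∧ ⊥ ∉ S, (f S + f (insert ⊥ S)) := calc
  ∑ S with M.IsNBC S, f S
      = ∑ S ∈ (insert ⊥ (univ.erase ⊥)).powerset, if M.IsNBC S then f S else 0 := by
    rw [insert_erase (mem_univ _), powerset_univ, sum_filter]
  _ = ∑ S ∈ (univ.erase ⊥).powerset, if M.IsNBC S then f S + f (insert ⊥ S) else 0 := by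
    rw [sum_powerset_insert (notMem_erase _ _), ← sum_add_distrib]
    simp_rw [isNBC_insert_bot_iff, ite_add_ite, add_zero]
  _ = _ := by
    rw [← sum_filter]
    congr 1
    ext S
    simp [subset_erase, and_comm]

theorem charPoly_eq_mul_sum (hrk : M.rk univ = r + 1) :
    M.charPoly = (X - 1) * ∑ S with M.IsNBC S ∧ ⊥ ∉ S, C ((-1) ^ #S) * X ^ (r - #S) := by
  rw [charPoly_eq_sum_isNBC, sum_isNBC_eq_sum_bot_notMem, mul_sum]
  refine sum_congr rfl fun S hS => ?_
  obtain ⟨hS, hbot⟩ := (mem_filter.1 hS).2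
  have hSr : #S < r + 1 := hrk ▸ hS.card_lt_rk_univ hbot
  rw [hrk, card_insert_of_notMem hbot, show r + 1 - #S = r - #S + 1 by omega,
    Nat.add_sub_add_right, pow_succ, pow_succ]
  simp only [map_pow, map_neg, map_one]
  ring

theorem redCharPoly_eq_sum (hrk : M.rk univ = r + 1) :
    M.redCharPoly = ∑ S with M.IsNBC S ∧ ⊥ ∉ S, C ((-1) ^ #S) * X ^ (r - #S) := by
  rw [redCharPoly, charPoly_eq_mul_sum hrk,
    mul_divByMonic_cancel_left _ (by simpa using monic_X_sub_C (1 : ℤ))]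

theorem neg_one_pow_mul_coeff_redCharPoly (hrk : M.rk univ = r + 1) (hkr : k ≤ r) :
    (-1) ^ k * M.redCharPoly.coeff (r - k) = #{S | #S = k ∧ M.IsNBC S ∧ ⊥ ∉ S} := by
  have hcoeff : ∀ S ∈ ({S | M.IsNBC S ∧ ⊥ ∉ S} : Finset (Finset E)),
      (C ((-1 : ℤ) ^ #S) * X ^ (r - #S)).coeff (r - k) = if #S = k then (-1) ^ k else 0 := by
    intro S hS
    obtain ⟨hS, hbot⟩ := (mem_filter.1 hS).2
    have hSr : #S < r + 1 := hrk ▸ hS.card_lt_rk_univ hbot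
    rw [coeff_C_mul_X_pow]
    by_cases hSk : #S = k
    · rw [if_pos (by omega), if_pos hSk, hSk]
    · rw [if_neg (by omega), if_neg hSk]
  rw [redCharPoly_eq_sum hrk, finsetSum_coeff, sum_congr rfl hcoeff, ← sum_filter, sum_const,
    nsmul_eq_mul, filter_filter, mul_left_comm, ← pow_add, ← two_mul, pow_mul, neg_one_sq,
    one_pow, mul_one]
  congr 3
  ext S
  exact and_comm

end CharPoly

section Flags

variable {E : Type*} [LinearOrder E] [Fintype E] {M : FinMatroid E} {k : ℕ} {e : Fin k → E}
  {m : Fin k} {x : E}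

variable (M) in
def flagOf (e : Fin k → E) (m : Fin k) : Finset E := M.closure ((Iic m).image e)

theorem rk_image_Iic (he : StrictAnti e) (hS : M.IsNBC (univ.image e)) (m : Fin k) :
    M.rk ((Iic m).image e) = m + 1 := by
  rw [(hS.subset (image_subset_image (subset_univ _))).rk_eq_card,
    card_image_of_injective _ he.injective, Fin.card_Iic]

theorem rk_flagOf (he : StrictAnti e) (hS : M.IsNBC (univ.image e)) (m : Fin k) :
    M.rk (M.flagOf e m) = m + 1 := by
  rw [flagOf, rk_closure, rk_image_Iic he hS]

theorem mem_flagOf_self (m : Fin k) : e m ∈ M.flagOf e m :=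
  subset_closure M _ (mem_image_of_mem e (mem_Iic.2 le_rfl))

theorem le_of_mem_flagOf (he : StrictAnti e) (hS : M.IsNBC (univ.image e))
    (hx : x ∈ M.flagOf e m) : e m ≤ x := by
  by_contra! hxm
  refine hS.notMem_closure x (closure_mono (fun y hy => ?_) hx)
  obtain ⟨j, hj, rfl⟩ := mem_image.1 hy
  exact mem_filter.2 ⟨mem_image_of_mem e (mem_univ j), hxm.trans_le (he.antitone (mem_Iic.1 hj))⟩

theorem min'_flagOf (he : StrictAnti e) (hS : M.IsNBC (univ.image e)) (m : Fin k) :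
    (M.flagOf e m).min' ⟨e m, mem_flagOf_self m⟩ = e m :=
  le_antisymm (min'_le _ _ (mem_flagOf_self m)) (le_min' _ _ _ fun _ => le_of_mem_flagOf he hS)

theorem strictMono_flagOf (he : StrictAnti e) (hS : M.IsNBC (univ.image e)) :
    StrictMono (M.flagOf e) := by
  refine Monotone.strictMono_of_injective (fun a b hab => closure_mono ?_) fun a b hab => ?_
  · exact image_subset_image (Iic_subset_Iic.2 hab)
  · have := congrArg M.rk hab
    rw [rk_flagOf he hS, rk_flagOf he hS] at this
    exact Fin.ext (by omega)

variable [OrderBot E]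

variable (M) in
structure IsInitialDescendingFlag (𝓕 : Fin k → Finset E) : Prop where
  isFlat : ∀ m, M.IsFlat (𝓕 m)
  nonempty : ∀ m, (𝓕 m).Nonempty
  ne_univ : ∀ m, 𝓕 m ≠ univ
  rk_eq : ∀ m, M.rk (𝓕 m) = m + 1
  strictMono : StrictMono 𝓕
  min'_strictAnti : StrictAnti fun m => (𝓕 m).min' (nonempty m)
  bot_lt_min' : ∀ m, ⊥ < (𝓕 m).min' (nonempty m)

theorem isInitialDescendingFlag_flagOf {r : ℕ} (hrk : M.rk univ = r + 1) (hkr : k ≤ r)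
    (he : StrictAnti e) (hS : M.IsNBC (univ.image e)) (hbot : ⊥ ∉ univ.image e) :
    M.IsInitialDescendingFlag (M.flagOf e) where
  isFlat _ := isFlat_closure _
  nonempty m := ⟨e m, mem_flagOf_self m⟩
  ne_univ m h := by
    have := rk_flagOf he hS m
    rw [h, hrk] at this
    omega
  rk_eq := rk_flagOf he hS
  strictMono := strictMono_flagOf he hS
  min'_strictAnti a b hab := by
    simp only [min'_flagOf he hS]
    exact he hab
  bot_lt_min' m := by
    rw [min'_flagOf he hS, bot_lt_iff_ne_bot]
    exact fun h => hbot (h ▸ mem_image_of_mem e (mem_univ m))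

namespace IsInitialDescendingFlag

variable {𝓕 : Fin k → Finset E} (h : M.IsInitialDescendingFlag 𝓕)

def mins : Fin k → E := fun m => (𝓕 m).min' (h.nonempty m)

theorem mins_mem (m : Fin k) : h.mins m ∈ 𝓕 m := min'_mem _ _

theorem mins_le (hx : x ∈ 𝓕 m) : h.mins m ≤ x := min'_le _ _ hx

theorem mins_strictAnti : StrictAnti h.mins := h.min'_strictAnti

theorem image_mins_Iic_subset (m : Fin k) : (Iic m).image h.mins ⊆ 𝓕 m := by
  intro y hy
  obtain ⟨j, hj, rfl⟩ := mem_image.1 hy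
  exact h.strictMono.monotone (mem_Iic.1 hj) (h.mins_mem j)

theorem bot_notMem_image_mins : ⊥ ∉ univ.image h.mins := by
  intro hbot
  obtain ⟨m, -, hm⟩ := mem_image.1 hbot
  exact (h.bot_lt_min' m).ne' hm

theorem isNBC_image_mins (hM : M.Loopless) : M.IsNBC (univ.image h.mins) := by
  refine eq_empty_iff_forall_notMem.2 fun x hx => ?_
  rw [mem_brokenPoints] at hx
  set J : Finset (Fin k) := {j | x < h.mins j}
  rcases J.eq_empty_or_nonempty with hJ | hJ
  · have hempty : {y ∈ univ.image h.mins | x < y} = ∅ := by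
      refine filter_eq_empty_iff.2 fun y hy hxy => ?_
      obtain ⟨j, -, rfl⟩ := mem_image.1 hy
      exact (filter_eq_empty_iff.1 hJ) (mem_univ j) hxy
    exact hM.notMem_closure_empty x (hempty ▸ hx)
  · -- the elements of the NBC set above `x` all lie in the flat indexed by the largest such index
    have hxj : x < h.mins (J.max' hJ) := (mem_filter.1 (J.max'_mem hJ)).2
    refine (h.mins_le ((h.isFlat _).closure_subset (fun y hy => ?_) hx)).not_gt hxj
    obtain ⟨hy, hxy⟩ := mem_filter.1 hy
    obtain ⟨j, -, rfl⟩ := mem_image.1 hy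
    exact h.strictMono.monotone (J.le_max' j (mem_filter.2 ⟨mem_univ j, hxy⟩)) (h.mins_mem j)

theorem flagOf_mins (hM : M.Loopless) : M.flagOf h.mins = 𝓕 := funext fun m =>
  (h.isFlat m).closure_eq_of_rk_eq (h.image_mins_Iic_subset m) <| by
    rw [rk_image_Iic h.mins_strictAnti (h.isNBC_image_mins hM), h.rk_eq]

end IsInitialDescendingFlag

theorem card_isInitialDescendingFlag {r : ℕ} (hM : M.Loopless) (hrk : M.rk univ = r + 1)
    (hkr : k ≤ r) :
    Nat.card {𝓕 : Fin k → Finset E // M.IsInitialDescendingFlag 𝓕} =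
      #{S | #S = k ∧ M.IsNBC S ∧ ⊥ ∉ S} := by
  rw [← natCard_strictAnti_eq_card]
  exact Nat.card_congr
    { toFun := fun 𝓕 => ⟨𝓕.2.mins, 𝓕.2.mins_strictAnti, 𝓕.2.isNBC_image_mins hM,
        𝓕.2.bot_notMem_image_mins⟩
      invFun := fun e =>
        ⟨M.flagOf e.1, isInitialDescendingFlag_flagOf hrk hkr e.2.1 e.2.2.1 e.2.2.2⟩
      left_inv := fun 𝓕 => Subtype.ext (𝓕.2.flagOf_mins hM)
      right_inv := fun e => Subtype.ext (funext (min'_flagOf e.2.1 e.2.2.1)) }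

theorem isInitialDescendingFlag_iff (hk : 1 ≤ k) {𝓕 : Fin k → Finset E} :
    M.IsInitialDescendingFlag 𝓕 ↔
      (∀ m, M.IsFlat (𝓕 m)) ∧ (∀ m, (𝓕 m).Nonempty) ∧ (∀ m, 𝓕 m ≠ univ) ∧
      (∀ m : Fin k, M.rk (𝓕 m) = (m : ℕ) + 1) ∧ (∀ m m' : Fin k, m < m' → 𝓕 m ⊂ 𝓕 m') ∧
      (∀ m m' : Fin k, m < m' → ∀ (h : (𝓕 m).Nonempty) (h' : (𝓕 m').Nonempty),
        (𝓕 m').min' h' < (𝓕 m).min' h) ∧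
      (∀ h : (𝓕 ⟨k - 1, by omega⟩).Nonempty, ⊥ < (𝓕 ⟨k - 1, by omega⟩).min' h) := by
  refine ⟨fun h => ⟨h.isFlat, h.nonempty, h.ne_univ, h.rk_eq, fun _ _ hmm => h.strictMono hmm,
    fun _ _ hmm _ _ => h.min'_strictAnti hmm, fun _ => h.bot_lt_min' _⟩, ?_⟩
  rintro ⟨hflat, hne, hne_univ, hrk, hmono, hanti, hbot⟩
  have hanti' : StrictAnti fun m => (𝓕 m).min' (hne m) := fun _ _ hmm => hanti _ _ hmm _ _
  exact ⟨hflat, hne, hne_univ, hrk, fun _ _ => hmono _ _, hanti', fun m =>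
    (hbot _).trans_le (hanti'.antitone (Fin.le_iff_val_le_val.2 (Nat.le_sub_one_of_lt m.2)))⟩

end Flags

end FinMatroid

/-- For `1 ≤ k ≤ r`, the coefficient `μ^k(M)` of the reduced characteristic
polynomial of a loopless matroid `M` of rank `r+1` on `E = {0,…,n}` equals the number of
initial descending `k`-step flags of nonempty proper flats: flags `F_1 ⊊ ⋯ ⊊ F_k` with
`rk(F_m) = m` for all `m` and `min F_1 > min F_2 > ⋯ > min F_k > 0`. -/
theorem mu_eq_card_initial_descending_flags (n r k : ℕ)
    (M : FinMatroid (Fin (n + 1))) (hM : M.Loopless)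
    (hrk : M.rk Finset.univ = r + 1) (hk : 1 ≤ k) (hkr : k ≤ r) :
    (-1 : ℤ) ^ k * M.redCharPoly.coeff (r - k) =
    Nat.card {𝓕 : Fin k → Finset (Fin (n + 1)) //
      (∀ m, M.IsFlat (𝓕 m)) ∧
      (∀ m, (𝓕 m).Nonempty) ∧
      (∀ m, 𝓕 m ≠ Finset.univ) ∧
      (∀ m : Fin k, M.rk (𝓕 m) = (m : ℕ) + 1) ∧
      (∀ m m' : Fin k, m < m' → 𝓕 m ⊂ 𝓕 m') ∧
      (∀ m m' : Fin k, m < m' → ∀ (h : (𝓕 m).Nonempty) (h' : (𝓕 m').Nonempty),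
        (𝓕 m').min' h' < (𝓕 m).min' h) ∧
      (∀ h : (𝓕 ⟨k - 1, by omega⟩).Nonempty,
        (0 : Fin (n + 1)) < (𝓕 ⟨k - 1, by omega⟩).min' h)} := by
  rw [FinMatroid.neg_one_pow_mul_coeff_redCharPoly hrk hkr,
    ← FinMatroid.card_isInitialDescendingFlag hM hrk hkr]
  exact congrArg _ (Nat.card_congr
    (Equiv.subtypeEquivRight fun _ => FinMatroid.isInitialDescendingFlag_iff hk))
end

section
/- Let R* be a graded Artinian ℝ-algebra satisfying Poincaré duality of dimension r with degree isomorphism deg: R^r → ℝ, and let x be a nonzero element of R^d. Then the quotient R*/ann(x), where ann(x) = {a : x·a = 0}, is a Poincaré duality algebra of dimension r−d with degree map a + ann(x) ↦ deg(x·a). -/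
/-!
Multiplication by `x` identifies the degree-`q` piece of `R*/ann(x)` with `x·R^q ⊆ R^{q+d}`, so
every axiom is inherited from `R*`. The top piece `x·R^{r-d}` is a subspace of the line `R^r`,
nonzero because `x` itself pairs nontrivially with `R^{r-d}`; and the pairing of `x·R^{r-d-q}`
with `R^q` is the restriction of the perfect pairing `R^{r-q} × R^q → R^r`.
-/

open Module

section PDAlgebra

variable {A : Type*} [CommRing A] [Algebra ℝ A]

/-- A graded algebra `R*` (with grading `R : ℕ → Submodule ℝ A` of the finite-dimensional
ℝ-algebra `A`) satisfies Poincaré duality of dimension `r`: `R^0 ≅ ℝ`, `R^r ≅ ℝ`,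
`R^q = 0` for `q > r`, and the multiplication pairings `R^{r-q} × R^q → R^r` are perfect
(expressed by nondegeneracy, which for finite-dimensional graded pieces and all `q ≤ r`
is equivalent to the induced maps `R^{r-q} → Hom(R^q, R^r)` being isomorphisms). -/
def IsPDAlgebra (R : ℕ → Submodule ℝ A) (r : ℕ) : Prop :=
  Module.finrank ℝ (R 0) = 1 ∧ Module.finrank ℝ (R r) = 1 ∧
  (∀ q, r < q → R q = ⊥) ∧
  (∀ q ≤ r, ∀ x ∈ R (r - q), (∀ y ∈ R q, x * y = 0) → x = 0)

/-- `deg : A →ₗ[ℝ] ℝ` restricts to an isomorphism `R^r ≅ ℝ` (a degree map). -/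
def IsDegreeMap (R : ℕ → Submodule ℝ A) (r : ℕ) (deg : A →ₗ[ℝ] ℝ) : Prop :=
  (∀ x ∈ R r, deg x = 0 → x = 0) ∧ ∃ x ∈ R r, deg x = 1

/-- Hard Lefschetz property `HL(ℓ)`: for all `q ≤ r/2`, multiplication by `ℓ^{r-2q}` is an
isomorphism (i.e. an injective and surjective map) `R^q → R^{r-q}`. -/
def HardLefschetz (R : ℕ → Submodule ℝ A) (r : ℕ) (ℓ : A) : Prop :=
  ∀ q, 2 * q ≤ r →
    (∀ a ∈ R q, ℓ ^ (r - 2 * q) * a = 0 → a = 0) ∧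
    (∀ b ∈ R (r - q), ∃ a ∈ R q, ℓ ^ (r - 2 * q) * a = b)

/-- Hodge–Riemann relations `HR(ℓ)`: for all `q ≤ r/2`, the Hodge–Riemann form
`Q_ℓ^q(a,b) = (-1)^q deg(a · ℓ^{r-2q} · b)` is positive definite on the primitive
subspace `P_ℓ^q = {a ∈ R^q : ℓ^{r-2q+1} a = 0}`. -/
def HodgeRiemann (R : ℕ → Submodule ℝ A) (r : ℕ) (deg : A →ₗ[ℝ] ℝ) (ℓ : A) : Prop :=
  ∀ q, 2 * q ≤ r → ∀ a ∈ R q, a ≠ 0 → ℓ ^ (r - 2 * q + 1) * a = 0 →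
    0 < (-1 : ℝ) ^ q * deg (a * (ℓ ^ (r - 2 * q) * a))

end PDAlgebra

theorem Submodule.finrank_eq_one_of_finrank_le_one {K V : Type*} [DivisionRing K]
    [AddCommGroup V] [Module K V] {N : Submodule K V} [Module.Finite K N]
    (h : finrank K N ≤ 1) {v : V} (hv : v ∈ N) (hv0 : v ≠ 0) : finrank K N = 1 :=
  le_antisymm h (Submodule.one_le_finrank_iff.mpr (N.ne_bot_iff.mpr ⟨v, hv, hv0⟩))

theorem Submodule.map_mulLeft_le_of_mem_graded {ι K A : Type*} [Add ι] [CommSemiring K]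
    [Semiring A] [Algebra K A] {R : ι → Submodule K A} [SetLike.GradedMul R] {x : A} {d : ι}
    (hx : x ∈ R d) (q : ι) : (R q).map (LinearMap.mulLeft K x) ≤ R (d + q) := by
  rintro _ ⟨b, hb, rfl⟩
  exact SetLike.mul_mem_graded hx hb

namespace IsPDAlgebra

variable {A : Type*} [CommRing A] [Algebra ℝ A] {R : ℕ → Submodule ℝ A} {r : ℕ}

theorem le_of_mem_of_ne_zero (hPD : IsPDAlgebra R r) {x : A} {d : ℕ} (hx : x ∈ R d)
    (hx0 : x ≠ 0) : d ≤ r := by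
  by_contra! hrd
  rw [hPD.2.2.1 d hrd, Submodule.mem_bot] at hx
  exact hx0 hx

theorem exists_mul_ne_zero (hPD : IsPDAlgebra R r) {q : ℕ} (hq : q ≤ r) {x : A}
    (hx : x ∈ R (r - q)) (hx0 : x ≠ 0) : ∃ a ∈ R q, x * a ≠ 0 := by
  by_contra! h
  exact hx0 (hPD.2.2.2 q hq x hx h)

end IsPDAlgebra

/-- Let `R*` be a graded Artinian (finite-dimensional) ℝ-algebra satisfying
Poincaré duality of dimension `r`, and `x ≠ 0` an element of `R^d`.  Then the quotient
`R*/ann(x)` is a Poincaré duality algebra of dimension `r-d` with degree map induced by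
`a ↦ deg(x·a)`.  The degree-`q` piece of the quotient is identified with `x·R^q ⊆ R^{q+d}`,
and the multiplication pairing of classes of `a` and `b` is the class of `x·a·b`. -/
theorem quotient_by_annihilator_isPD {A : Type*} [CommRing A] [Algebra ℝ A]
    [FiniteDimensional ℝ A] (R : ℕ → Submodule ℝ A) [GradedAlgebra R] (r d : ℕ)
    (hPD : IsPDAlgebra R r) (x : A) (hxd : x ∈ R d) (hx : x ≠ 0) :
    Module.finrank ℝ ((R 0).map (LinearMap.mulLeft ℝ x)) = 1 ∧
    Module.finrank ℝ ((R (r - d)).map (LinearMap.mulLeft ℝ x)) = 1 ∧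
    (∀ q, r - d < q → (R q).map (LinearMap.mulLeft ℝ x) = ⊥) ∧
    (∀ q ≤ r - d, ∀ a ∈ R (r - d - q), (∀ b ∈ R q, x * a * b = 0) → x * a = 0) := by
  have hdr : d ≤ r := hPD.le_of_mem_of_ne_zero hxd hx
  have ⟨h0, hr, htop, hnd⟩ := hPD
  refine ⟨?_, ?_, ?_, ?_⟩
  · exact Submodule.finrank_eq_one_of_finrank_le_one (h0 ▸ Submodule.finrank_map_le _ _)
      ⟨1, SetLike.one_mem_graded R, mul_one x⟩ hx
  · have hx' : x ∈ R (r - (r - d)) := by rwa [Nat.sub_sub_self hdr]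
    obtain ⟨a, ha, hxa⟩ := hPD.exists_mul_ne_zero (Nat.sub_le r d) hx' hx
    have hle := Submodule.map_mulLeft_le_of_mem_graded hxd (r - d)
    rw [Nat.add_sub_cancel' hdr] at hle
    exact Submodule.finrank_eq_one_of_finrank_le_one (hr ▸ Submodule.finrank_mono hle)
      ⟨a, ha, rfl⟩ hxa
  · intro q hq
    rw [eq_bot_iff, ← htop (d + q) (by omega)]
    exact Submodule.map_mulLeft_le_of_mem_graded hxd q
  · intro q hq a ha hab
    have hxa : x * a ∈ R (d + (r - d - q)) := SetLike.mul_mem_graded hxd ha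
    rw [show d + (r - d - q) = r - q by omega] at hxa
    exact hnd q (by omega) (x * a) hxa hab
end

section
/- Let R* be a Poincaré duality algebra of dimension r satisfying HL(ℓ). Then R* satisfies HR(ℓ) if and only if for all q ≤ r/2 the Hodge–Riemann form Q_ℓ^q on R^q is nondegenerate with signature Σ_{p=0}^q (−1)^{q−p}(dim R^p − dim R^{p−1}). -/
open Module

/-!
HL gives the Lefschetz decomposition `R^{q+1} = P_ℓ^{q+1} ⊕ ℓ R^q`, which is orthogonal for
`Q_ℓ^{q+1}` and satisfies `Q_ℓ^{q+1}(ℓa, ℓb) = -Q_ℓ^q(a, b)`. If `Q_ℓ^{q+1}` is positive definite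
on `P_ℓ^{q+1}`, a splitting `R^q = P' ⊕ N'` into a positive and a negative definite part therefore
gives the splitting `R^{q+1} = (P_ℓ^{q+1} ⊕ ℓN') ⊕ ℓP'`, so the signatures satisfy
`σ_{q+1} = dim R^{q+1} - dim R^q - σ_q`, which is the stated formula by induction.
Conversely, if the signatures are as stated but `Q_ℓ^{q+1}` is not positive definite on
`P_ℓ^{q+1}`, its nondegeneracy (Poincaré duality and HL) yields a primitive `a` with
`Q_ℓ^{q+1}(a, a) < 0`, and `ℝa ⊕ ℓP'` is a negative definite subspace of dimension
`dim P' + 1`, exceeding the negative index `dim P'` of `Q_ℓ^{q+1}`.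
-/

namespace LinearMap.BilinForm

variable {U V : Type*} [AddCommGroup U] [Module ℝ U] [AddCommGroup V] [Module ℝ V]

def PosDefOn (B : LinearMap.BilinForm ℝ V) (S : Submodule ℝ V) : Prop :=
  ∀ v ∈ S, v ≠ 0 → 0 < B v v

/-- `finrank P - finrank N` is the signature of `B`. -/
structure IsSignatureSplitting (B : LinearMap.BilinForm ℝ V) (P N : Submodule ℝ V) : Prop where
  isCompl : IsCompl P N
  posDefOn : B.PosDefOn P
  negDefOn : (-B).PosDefOn N
  apply_eq_zero : ∀ v ∈ P, ∀ w ∈ N, B v w = 0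

variable {B : LinearMap.BilinForm ℝ V} {S T W P N : Submodule ℝ V}

lemma PosDefOn.nonneg (h : B.PosDefOn S) {v : V} (hv : v ∈ S) : 0 ≤ B v v := by
  rcases eq_or_ne v 0 with rfl | hv0
  · simp
  · exact (h v hv hv0).le

lemma PosDefOn.sup (hB : B.IsSymm) (hS : B.PosDefOn S) (hT : B.PosDefOn T)
    (hST : ∀ x ∈ S, ∀ y ∈ T, B x y = 0) : B.PosDefOn (S ⊔ T) := by
  rintro _ hv hv0
  obtain ⟨x, hx, y, hy, rfl⟩ := Submodule.mem_sup.mp hv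
  have hxy : B (x + y) (x + y) = B x x + B y y := by
    simp only [map_add, LinearMap.add_apply, hST x hx y hy, ← hB.eq x y]
    ring
  rw [hxy]
  rcases eq_or_ne x 0 with rfl | hx0
  · simpa using hT y hy (by simpa using hv0)
  · exact add_pos_of_pos_of_nonneg (hS x hx hx0) (hT.nonneg hy)

lemma PosDefOn.map {B' : LinearMap.BilinForm ℝ U} {S : Submodule ℝ U} (h : B'.PosDefOn S)
    (f : U →ₗ[ℝ] V) (hf : ∀ u u', B (f u) (f u') = B' u u') : B.PosDefOn (S.map f) := by
  rintro _ ⟨u, hu, rfl⟩ hu0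
  rw [hf]
  exact h u hu (by rintro rfl; exact hu0 (map_zero f))

lemma posDefOn_span_singleton {v : V} (hv : 0 < B v v) : B.PosDefOn (ℝ ∙ v) := by
  rintro _ hw hw0
  obtain ⟨t, rfl⟩ := Submodule.mem_span_singleton.mp hw
  have ht : t ≠ 0 := by rintro rfl; simp at hw0
  simpa [mul_assoc] using mul_pos (mul_self_pos.mpr ht) hv

lemma PosDefOn.disjoint (hS : B.PosDefOn S) (hT : (-B).PosDefOn T) : Disjoint S T := by
  refine Submodule.disjoint_def.mpr fun v hvS hvT => by_contra fun hv0 => ?_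
  have := hT v hvT hv0
  simp only [LinearMap.neg_apply, neg_pos] at this
  exact (hS v hvS hv0).not_gt this

/-- An isotropic `x` with `B x y ≠ 0` would give
`B (t • x + y) (t • x + y) = 2 t B x y + B y y < 0` for suitable `t`. -/
lemma posDefOn_of_nonneg (hB : B.IsSymm) (hS : ∀ x ∈ S, (∀ y ∈ S, B x y = 0) → x = 0)
    (hnonneg : ∀ x ∈ S, 0 ≤ B x x) : B.PosDefOn S := by
  intro x hx hx0
  refine (hnonneg x hx).lt_of_ne fun hxx => ?_
  obtain ⟨y, hy, hxy⟩ : ∃ y ∈ S, B x y ≠ 0 := by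
    by_contra! h
    exact hx0 (hS x hx h)
  set t := -(B y y + 1) / (2 * B x y)
  have hneg : B (t • x + y) (t • x + y) = -1 := by
    simp only [map_add, map_smul, LinearMap.add_apply, LinearMap.smul_apply, smul_eq_mul,
      ← hxx, hB.eq y x, t]
    field_simp
    ring
  have := hnonneg _ (S.add_mem (S.smul_mem t hx) hy)
  linarith

lemma isSignatureSplitting_top_bot (h : B.PosDefOn ⊤) : B.IsSignatureSplitting ⊤ ⊥ where
  isCompl := isCompl_top_bot
  posDefOn := h
  negDefOn v hv hv0 := absurd ((Submodule.mem_bot ℝ).mp hv) hv0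
  apply_eq_zero v _ w hw := by simp [(Submodule.mem_bot ℝ).mp hw]

namespace IsSignatureSplitting

lemma neg (hB : B.IsSymm) (h : B.IsSignatureSplitting P N) : (-B).IsSignatureSplitting N P where
  isCompl := h.isCompl.symm
  posDefOn := h.negDefOn
  negDefOn := (neg_neg B).symm ▸ h.posDefOn
  apply_eq_zero v hv w hw := by simp [hB.eq v w, h.apply_eq_zero w hw v hv]

lemma finrank_le [FiniteDimensional ℝ V] (h : B.IsSignatureSplitting P N) (hW : B.PosDefOn W) :
    finrank ℝ W ≤ finrank ℝ P := by
  have := Submodule.finrank_add_finrank_le_of_disjoint (hW.disjoint h.negDefOn)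
  have := Submodule.finrank_add_eq_of_isCompl h.isCompl
  omega

lemma posDefOn_top [FiniteDimensional ℝ V] (h : B.IsSignatureSplitting P N)
    (hN : finrank ℝ N = 0) : B.PosDefOn ⊤ := by
  have hP : P = ⊤ := eq_top_of_isCompl_bot (Submodule.finrank_eq_zero.mp hN ▸ h.isCompl)
  exact hP ▸ h.posDefOn

end IsSignatureSplitting

/-- The shape of one step `R^{q+1} = P^{q+1} ⊕ ℓ R^q` of the Lefschetz decomposition. -/
structure IsLefschetzDecomposition (B' : LinearMap.BilinForm ℝ U) (B : LinearMap.BilinForm ℝ V)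
    (f : U →ₗ[ℝ] V) (X : Submodule ℝ V) : Prop where
  injective : Function.Injective f
  isCompl : IsCompl X (LinearMap.range f)
  apply_map_eq_zero : ∀ x ∈ X, ∀ u, B x (f u) = 0
  map_map : ∀ u u', B (f u) (f u') = -B' u u'

namespace IsLefschetzDecomposition

variable {B' : LinearMap.BilinForm ℝ U} {f : U →ₗ[ℝ] V} {X : Submodule ℝ V}
  {P' N' : Submodule ℝ U}

lemma isSymm (D : IsLefschetzDecomposition B' B f X) (hB : B.IsSymm) : B'.IsSymm :=
  ⟨fun u u' => by rw [← neg_inj, ← D.map_map, ← D.map_map, hB.eq]⟩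

lemma finrank_sup_map [FiniteDimensional ℝ V] (D : IsLefschetzDecomposition B' B f X)
    (hS : S ≤ X) (T : Submodule ℝ U) :
    finrank ℝ ↥(S ⊔ T.map f) = finrank ℝ S + finrank ℝ T := by
  have hdisj : Disjoint S (T.map f) := D.isCompl.disjoint.mono hS LinearMap.map_le_range
  have := Submodule.finrank_sup_add_finrank_inf_eq S (T.map f)
  rw [hdisj.eq_bot, finrank_bot, add_zero,
    ← (Submodule.equivMapOfInjective f D.injective T).finrank_eq] at this
  exact this

lemma finrank_add [FiniteDimensional ℝ V] (D : IsLefschetzDecomposition B' B f X) :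
    finrank ℝ X + finrank ℝ U = finrank ℝ V := by
  rw [← LinearMap.finrank_range_of_inj D.injective]
  exact Submodule.finrank_add_eq_of_isCompl D.isCompl

lemma eq_zero_of_forall_apply_eq_zero (D : IsLefschetzDecomposition B' B f X)
    (hB : LinearMap.SeparatingLeft B) {x : V} (hx : x ∈ X) (h : ∀ y ∈ X, B x y = 0) : x = 0 := by
  refine hB x fun v => ?_
  have hv : v ∈ X ⊔ LinearMap.range f := D.isCompl.sup_eq_top ▸ Submodule.mem_top
  obtain ⟨y, hy, _, ⟨u, rfl⟩, rfl⟩ := Submodule.mem_sup.mp hv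
  rw [map_add, h y hy, D.apply_map_eq_zero x hx u, add_zero]

lemma isSignatureSplitting_sup_map (D : IsLefschetzDecomposition B' B f X) (hB : B.IsSymm)
    (hX : B.PosDefOn X) (h : B'.IsSignatureSplitting P' N') :
    B.IsSignatureSplitting (X ⊔ N'.map f) (P'.map f) where
  isCompl := by
    refine Disjoint.isCompl_sup_left_of_isCompl_sup_right
      (Submodule.disjoint_map D.injective h.isCompl.disjoint.symm) ?_
    rw [← Submodule.map_sup, h.isCompl.symm.sup_eq_top, Submodule.map_top]
    exact D.isCompl
  posDefOn := hX.sup hB (h.negDefOn.map f fun u u' => by simp [D.map_map])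
    fun x hx _ ⟨u, _, hu⟩ => hu ▸ D.apply_map_eq_zero x hx u
  negDefOn := h.posDefOn.map f fun u u' => by simp [D.map_map]
  apply_eq_zero v hv _ := by
    rintro ⟨p, hp, rfl⟩
    obtain ⟨x, hx, _, ⟨n, hn, rfl⟩, rfl⟩ := Submodule.mem_sup.mp hv
    rw [map_add, LinearMap.add_apply, D.apply_map_eq_zero x hx, D.map_map, (D.isSymm hB).eq,
      h.apply_eq_zero p hp n hn]
    simp

lemma finrank_sub_finrank_sup_map [FiniteDimensional ℝ V] [FiniteDimensional ℝ U]
    (D : IsLefschetzDecomposition B' B f X) (h : IsCompl P' N') :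
    (finrank ℝ ↥(X ⊔ N'.map f) : ℤ) - finrank ℝ (P'.map f) =
      finrank ℝ V - finrank ℝ U - (finrank ℝ P' - finrank ℝ N') := by
  have h₁ := D.finrank_sup_map le_rfl N'
  have h₂ := D.finrank_sup_map bot_le P'
  have h₃ := D.finrank_add
  have h₄ := Submodule.finrank_add_eq_of_isCompl h
  rw [bot_sup_eq, finrank_bot, zero_add] at h₂
  omega

/-- A vector `a ∈ X` with `B a a < 0` would make `ℝ a ⊕ f(P')` a negative definite subspace
larger than `N`. -/
lemma posDefOn [FiniteDimensional ℝ V] [FiniteDimensional ℝ U]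
    (D : IsLefschetzDecomposition B' B f X) (hB : B.IsSymm) (hsep : LinearMap.SeparatingLeft B)
    (h : B.IsSignatureSplitting P N) (h' : B'.IsSignatureSplitting P' N')
    (hsig : (finrank ℝ P : ℤ) - finrank ℝ N =
      finrank ℝ V - finrank ℝ U - (finrank ℝ P' - finrank ℝ N')) :
    B.PosDefOn X := by
  refine posDefOn_of_nonneg hB (fun x hx => D.eq_zero_of_forall_apply_eq_zero hsep hx)
    fun a ha => not_lt.mp fun ha_neg => ?_
  have ha0 : a ≠ 0 := by rintro rfl; simp at ha_neg
  have hW : (-B).PosDefOn ((ℝ ∙ a) ⊔ P'.map f) := by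
    refine (posDefOn_span_singleton (by simpa using ha_neg)).sup hB.neg
      (h'.posDefOn.map f fun u u' => by simp [D.map_map]) ?_
    rintro _ hx _ ⟨u, _, rfl⟩
    obtain ⟨t, rfl⟩ := Submodule.mem_span_singleton.mp hx
    simp [D.apply_map_eq_zero a ha u]
  have hle := (h.neg hB).finrank_le hW
  rw [D.finrank_sup_map ((Submodule.span_singleton_le_iff_mem a X).mpr ha),
    finrank_span_singleton ha0] at hle
  have := Submodule.finrank_add_eq_of_isCompl h.isCompl
  have := Submodule.finrank_add_eq_of_isCompl h'.isCompl
  have := D.finrank_add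
  omega

end IsLefschetzDecomposition

end LinearMap.BilinForm

def alternatingDiffSum (d : ℕ → ℤ) (q : ℕ) : ℤ :=
  ∑ p ∈ Finset.range (q + 1), (-1 : ℤ) ^ (q - p) * (d p - if p = 0 then 0 else d (p - 1))

lemma alternatingDiffSum_zero (d : ℕ → ℤ) : alternatingDiffSum d 0 = d 0 := by
  simp [alternatingDiffSum]

lemma alternatingDiffSum_succ (d : ℕ → ℤ) (q : ℕ) :
    alternatingDiffSum d (q + 1) = d (q + 1) - d q - alternatingDiffSum d q := by
  have hsign : ∀ p ∈ Finset.range (q + 1), (-1 : ℤ) ^ (q + 1 - p) = -(-1) ^ (q - p) :=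
    fun p hp => by rw [Nat.sub_add_comm (Finset.mem_range_succ_iff.mp hp), pow_succ, mul_neg_one]
  rw [alternatingDiffSum, Finset.sum_range_succ,
    Finset.sum_congr rfl fun p hp => congrArg (· * _) (hsign p hp)]
  simp only [neg_mul, Finset.sum_neg_distrib, Nat.sub_self, pow_zero, one_mul,
    add_tsub_cancel_right, if_neg q.succ_ne_zero, alternatingDiffSum]
  ring

section GradedAlgebra

variable {A : Type*} [CommRing A] [Algebra ℝ A] (R : ℕ → Submodule ℝ A) {r : ℕ}
  {deg : A →ₗ[ℝ] ℝ} {ℓ : A}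

/-- `Q_ℓ^q`. -/
def hodgeRiemannForm (deg : A →ₗ[ℝ] ℝ) (ℓ : A) (r q : ℕ) : LinearMap.BilinForm ℝ (R q) :=
  (-1 : ℝ) ^ q • LinearMap.BilinForm.restrict
    (((LinearMap.mul ℝ A).compl₂ (LinearMap.mulLeft ℝ (ℓ ^ (r - 2 * q)))).compr₂ deg) (R q)

/-- `P_ℓ^q`. -/
def primitive (ℓ : A) (r q : ℕ) : Submodule ℝ (R q) :=
  LinearMap.ker ((LinearMap.mulLeft ℝ (ℓ ^ (r - 2 * q + 1))).domRestrict (R q))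

variable {R}

lemma hodgeRiemannForm_apply (q : ℕ) (a b : R q) :
    hodgeRiemannForm R deg ℓ r q a b = (-1) ^ q * deg (a * (ℓ ^ (r - 2 * q) * b)) :=
  rfl

lemma mem_primitive {q : ℕ} {a : R q} :
    a ∈ primitive R ℓ r q ↔ ℓ ^ (r - 2 * q + 1) * (a : A) = 0 :=
  Iff.rfl

lemma isSymm_hodgeRiemannForm (q : ℕ) : (hodgeRiemannForm R deg ℓ r q).IsSymm :=
  ⟨fun a b => by simp only [hodgeRiemannForm_apply]; ring_nf⟩

lemma hodgeRiemann_iff_posDefOn_primitive :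
    HodgeRiemann R r deg ℓ ↔
      ∀ q, 2 * q ≤ r → (hodgeRiemannForm R deg ℓ r q).PosDefOn (primitive R ℓ r q) :=
  ⟨fun h q hq a ha ha0 => h q hq a a.2 (by simpa using ha0) ha,
    fun h q hq a ha ha0 hprim => h q hq ⟨a, ha⟩ hprim (by simpa using ha0)⟩

variable [GradedAlgebra R]

lemma pow_mul_mem_graded (hℓ : ℓ ∈ R 1) (k : ℕ) {q : ℕ} {x : A} (hx : x ∈ R q) :
    ℓ ^ k * x ∈ R (k + q) := by
  simpa using SetLike.mul_mem_graded (SetLike.pow_mem_graded k hℓ) hx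

variable (R) in
def lefschetzMap (hℓ : ℓ ∈ R 1) (q : ℕ) : R q →ₗ[ℝ] R (q + 1) :=
  (LinearMap.mulLeft ℝ ℓ).restrict fun _ hx => by
    simpa [add_comm] using pow_mul_mem_graded hℓ 1 hx

lemma lefschetzMap_apply (hℓ : ℓ ∈ R 1) {q : ℕ} (a : R q) :
    (lefschetzMap R hℓ q a : A) = ℓ * a :=
  rfl

lemma primitive_zero (hPD : IsPDAlgebra R r) (hℓ : ℓ ∈ R 1) : primitive R ℓ r 0 = ⊤ := by
  refine eq_top_iff.mpr fun a _ => mem_primitive.mpr ?_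
  have := pow_mul_mem_graded hℓ (r - 2 * 0 + 1) a.2
  rwa [hPD.2.2.1 _ (by omega), Submodule.mem_bot] at this

lemma separatingLeft_hodgeRiemannForm (hPD : IsPDAlgebra R r) (hdeg : IsDegreeMap R r deg)
    (hℓ : ℓ ∈ R 1) (hHL : HardLefschetz R r ℓ) {q : ℕ} (hq : 2 * q ≤ r) :
    LinearMap.SeparatingLeft (hodgeRiemannForm R deg ℓ r q) := by
  intro a ha
  have hx : ℓ ^ (r - 2 * q) * (a : A) ∈ R (r - q) := by
    simpa [show r - 2 * q + q = r - q by omega] using pow_mul_mem_graded hℓ (r - 2 * q) a.2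
  refine Subtype.ext ((hHL q hq).1 a a.2 (hPD.2.2.2 q (by omega) _ hx fun y hy => ?_))
  refine hdeg.1 _ (by simpa [show r - q + q = r by omega] using SetLike.mul_mem_graded hx hy) ?_
  simpa [hodgeRiemannForm_apply, mul_comm, mul_left_comm] using ha ⟨y, hy⟩

lemma injective_lefschetzMap (hℓ : ℓ ∈ R 1) (hHL : HardLefschetz R r ℓ) {q : ℕ}
    (hq : 2 * q < r) : Function.Injective (lefschetzMap R hℓ q) := by
  refine (injective_iff_map_eq_zero _).mpr fun a ha => Subtype.ext ((hHL q hq.le).1 a a.2 ?_)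
  rw [show r - 2 * q = r - 2 * q - 1 + 1 by omega, pow_succ, mul_assoc, ← lefschetzMap_apply hℓ,
    ha, ZeroMemClass.coe_zero, mul_zero]

lemma isCompl_primitive_range_lefschetzMap (hℓ : ℓ ∈ R 1) (hHL : HardLefschetz R r ℓ) {q : ℕ}
    (hq : 2 * (q + 1) ≤ r) :
    IsCompl (primitive R ℓ r (q + 1)) (LinearMap.range (lefschetzMap R hℓ q)) := by
  have hpow : r - 2 * q = r - 2 * (q + 1) + 1 + 1 := by omega
  constructor
  · refine Submodule.disjoint_def.mpr ?_
    rintro _ hprim ⟨b, rfl⟩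
    have : ℓ ^ (r - 2 * q) * (b : A) = 0 := by
      rw [hpow, pow_succ, mul_assoc, ← lefschetzMap_apply hℓ]
      exact mem_primitive.mp hprim
    rw [show b = 0 from Subtype.ext ((hHL q (by omega)).1 b b.2 this), map_zero]
  · refine codisjoint_iff.mpr (eq_top_iff.mpr fun v _ => ?_)
    obtain ⟨b, hb, hbv⟩ := (hHL q (by omega)).2 _
      (by simpa [show r - 2 * (q + 1) + 1 + (q + 1) = r - q by omega] using
        pow_mul_mem_graded hℓ (r - 2 * (q + 1) + 1) v.2)
    refine Submodule.mem_sup.mpr ⟨v - lefschetzMap R hℓ q ⟨b, hb⟩, mem_primitive.mpr ?_,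
      _, ⟨⟨b, hb⟩, rfl⟩, sub_add_cancel _ _⟩
    rw [Submodule.coe_sub, lefschetzMap_apply, mul_sub, ← hbv, hpow, pow_succ]
    ring

lemma hodgeRiemannForm_lefschetzMap (hℓ : ℓ ∈ R 1) {q : ℕ} (hq : 2 * (q + 1) ≤ r) (a b : R q) :
    hodgeRiemannForm R deg ℓ r (q + 1) (lefschetzMap R hℓ q a) (lefschetzMap R hℓ q b) =
      -hodgeRiemannForm R deg ℓ r q a b := by
  simp only [hodgeRiemannForm_apply, lefschetzMap_apply,
    show r - 2 * q = r - 2 * (q + 1) + 2 by omega]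
  ring_nf

lemma hodgeRiemannForm_primitive_lefschetzMap (hℓ : ℓ ∈ R 1) {q : ℕ} {a : R (q + 1)}
    (ha : a ∈ primitive R ℓ r (q + 1)) (b : R q) :
    hodgeRiemannForm R deg ℓ r (q + 1) a (lefschetzMap R hℓ q b) = 0 := by
  have : (a : A) * (ℓ ^ (r - 2 * (q + 1)) * (ℓ * b)) = ℓ ^ (r - 2 * (q + 1) + 1) * a * b := by
    ring
  rw [hodgeRiemannForm_apply, lefschetzMap_apply, this, mem_primitive.mp ha]
  simp

lemma isLefschetzDecomposition (hℓ : ℓ ∈ R 1) (hHL : HardLefschetz R r ℓ) {q : ℕ}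
    (hq : 2 * (q + 1) ≤ r) :
    (hodgeRiemannForm R deg ℓ r q).IsLefschetzDecomposition (hodgeRiemannForm R deg ℓ r (q + 1))
      (lefschetzMap R hℓ q) (primitive R ℓ r (q + 1)) where
  injective := injective_lefschetzMap hℓ hHL (by omega)
  isCompl := isCompl_primitive_range_lefschetzMap hℓ hHL hq
  apply_map_eq_zero _ ha := hodgeRiemannForm_primitive_lefschetzMap hℓ ha
  map_map := hodgeRiemannForm_lefschetzMap hℓ hq

variable [FiniteDimensional ℝ A]

lemma exists_isSignatureSplitting_hodgeRiemannForm (hPD : IsPDAlgebra R r) (hℓ : ℓ ∈ R 1)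
    (hHL : HardLefschetz R r ℓ)
    (hHR : ∀ q, 2 * q ≤ r → (hodgeRiemannForm R deg ℓ r q).PosDefOn (primitive R ℓ r q)) :
    ∀ q, 2 * q ≤ r → ∃ P N, (hodgeRiemannForm R deg ℓ r q).IsSignatureSplitting P N ∧
      (finrank ℝ P : ℤ) - finrank ℝ N = alternatingDiffSum (fun p => finrank ℝ (R p)) q
  | 0, hq => ⟨⊤, ⊥, LinearMap.BilinForm.isSignatureSplitting_top_bot
      (primitive_zero hPD hℓ ▸ hHR 0 hq), by simp [alternatingDiffSum_zero]⟩
  | q + 1, hq => by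
    obtain ⟨P', N', h', hsig'⟩ :=
      exists_isSignatureSplitting_hodgeRiemannForm hPD hℓ hHL hHR q (by omega)
    have D := isLefschetzDecomposition (deg := deg) hℓ hHL hq
    refine ⟨_, _, D.isSignatureSplitting_sup_map (isSymm_hodgeRiemannForm _) (hHR _ hq) h', ?_⟩
    rw [D.finrank_sub_finrank_sup_map h'.isCompl, hsig', alternatingDiffSum_succ]

lemma posDefOn_primitive_of_isSignatureSplitting (hPD : IsPDAlgebra R r)
    (hdeg : IsDegreeMap R r deg) (hℓ : ℓ ∈ R 1) (hHL : HardLefschetz R r ℓ)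
    (hsig : ∀ q, 2 * q ≤ r → ∃ P N, (hodgeRiemannForm R deg ℓ r q).IsSignatureSplitting P N ∧
      (finrank ℝ P : ℤ) - finrank ℝ N = alternatingDiffSum (fun p => finrank ℝ (R p)) q) :
    ∀ q, 2 * q ≤ r → (hodgeRiemannForm R deg ℓ r q).PosDefOn (primitive R ℓ r q)
  | 0, hq => by
    obtain ⟨P, N, h, hPN⟩ := hsig 0 hq
    have := Submodule.finrank_add_eq_of_isCompl h.isCompl
    rw [alternatingDiffSum_zero] at hPN
    rw [primitive_zero hPD hℓ]
    exact h.posDefOn_top (by omega)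
  | q + 1, hq => by
    obtain ⟨P, N, h, hPN⟩ := hsig (q + 1) hq
    obtain ⟨P', N', h', hPN'⟩ := hsig q (by omega)
    refine (isLefschetzDecomposition hℓ hHL hq).posDefOn (isSymm_hodgeRiemannForm _)
      (separatingLeft_hodgeRiemannForm hPD hdeg hℓ hHL hq) h h' ?_
    rw [hPN, hPN', alternatingDiffSum_succ]

end GradedAlgebra

/-- Let `R*` be a Poincaré duality algebra of dimension `r` satisfying
`HL(ℓ)`.  Then `R*` satisfies `HR(ℓ)` if and only if for all `q ≤ r/2` the Hodge–Riemann
form `Q_ℓ^q` on `R^q` is nondegenerate with signature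
`Σ_{p=0}^q (-1)^{q-p}(dim R^p - dim R^{p-1})` (with `dim R^{-1} = 0`).
Having signature `s` is expressed by the existence of complementary, mutually
`Q`-orthogonal subspaces `P`, `N` on which `Q` is positive, resp. negative, definite,
with `dim P - dim N = s`. -/
theorem hodgeRiemann_iff_signature {A : Type*} [CommRing A] [Algebra ℝ A]
    [FiniteDimensional ℝ A] (R : ℕ → Submodule ℝ A) [GradedAlgebra R] (r : ℕ)
    (hPD : IsPDAlgebra R r) (deg : A →ₗ[ℝ] ℝ) (hdeg : IsDegreeMap R r deg)
    (ℓ : A) (hℓ : ℓ ∈ R 1) (hHL : HardLefschetz R r ℓ) :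
    HodgeRiemann R r deg ℓ ↔
      ∀ q, 2 * q ≤ r →
        ((∀ a : R q, (∀ b : R q, deg ((a : A) * (ℓ ^ (r - 2 * q) * (b : A))) = 0) → a = 0) ∧
         ∃ P N : Submodule ℝ (R q), IsCompl P N ∧
           (∀ v ∈ P, v ≠ 0 → 0 < (-1 : ℝ) ^ q * deg ((v : A) * (ℓ ^ (r - 2 * q) * (v : A)))) ∧
           (∀ v ∈ N, v ≠ 0 → (-1 : ℝ) ^ q * deg ((v : A) * (ℓ ^ (r - 2 * q) * (v : A))) < 0) ∧
           (∀ v ∈ P, ∀ w ∈ N, deg ((v : A) * (ℓ ^ (r - 2 * q) * (w : A))) = 0) ∧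
           (Module.finrank ℝ P : ℤ) - (Module.finrank ℝ N : ℤ) =
             ∑ p ∈ Finset.range (q + 1), (-1 : ℤ) ^ (q - p) *
               ((Module.finrank ℝ (R p) : ℤ) -
                 (if p = 0 then 0 else (Module.finrank ℝ (R (p - 1)) : ℤ)))) := by
  rw [hodgeRiemann_iff_posDefOn_primitive]
  constructor
  · intro hHR q hq
    obtain ⟨P, N, h, hPN⟩ := exists_isSignatureSplitting_hodgeRiemannForm hPD hℓ hHL hHR q hq
    refine ⟨fun a ha => separatingLeft_hodgeRiemannForm hPD hdeg hℓ hHL hq a fun b => ?_,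
      P, N, h.isCompl, h.posDefOn, fun v hv hv0 => neg_pos.mp (h.negDefOn v hv hv0),
      fun v hv w hw => ?_, hPN⟩
    · simp [hodgeRiemannForm_apply, ha b]
    · simpa [hodgeRiemannForm_apply] using h.apply_eq_zero v hv w hw
  · refine fun hsig => posDefOn_primitive_of_isSignatureSplitting hPD hdeg hℓ hHL fun q hq => ?_
    obtain ⟨-, P, N, hPN, hP, hN, horth, hsig⟩ := hsig q hq
    exact ⟨P, N, ⟨hPN, hP, fun v hv hv0 => neg_pos.mpr (hN v hv hv0),
      fun v hv w hw => by simp [hodgeRiemannForm_apply, horth v hv w hw]⟩, hsig⟩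
end

section
/- For nonnegative integers q ≤ r_1 ≤ r_2, the (q+1)×(q+1) matrix with entries a_{ij} = binom(r_1+r_2−2q, r_1−i−j), 0 ≤ i,j ≤ q, has determinant of sign (−1)^{q(q+1)/2}; that is, (−1)^{q(q+1)/2} det[a_{ij}] > 0. -/
/-!
Reversing the order of the columns, which costs the sign `(-1)^(q(q+1)/2)` of the reversal
permutation, turns the matrix into the minor with rows `0, …, q` and columns
`r₁ - q, …, r₁` of the Toeplitz matrix `(C(n, c - s))_{s,c}` of `(1 + x)^n`,
`n = r₁ + r₂ - 2q`. These minors are nonnegative, and positive when every diagonal entry is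
nonzero. By Pascal's rule row `s` of the matrix for `n + 1` is the sum of rows `s` and `s + 1`
of the matrix for `n`, so by multilinearity a minor for `n + 1` is a sum of `2^m` minors for `n`
with shifted row indices; each of these has either two equal rows or increasing row indices,
and shifting exactly the rows whose diagonal entry lies above the main diagonal keeps a
nonzero diagonal.
-/

open Matrix Finset Equiv Function

def binomToeplitz (n s c : ℕ) : ℤ := if s ≤ c then (n.choose (c - s) : ℤ) else 0

def binomMinor {m : ℕ} (n : ℕ) (r c : Fin m → ℕ) : Matrix (Fin m) (Fin m) ℤ :=
  of fun i j => binomToeplitz n (r i) (c j)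

lemma binomToeplitz_zero (s c : ℕ) : binomToeplitz 0 s c = if s = c then 1 else 0 := by
  unfold binomToeplitz
  rcases lt_trichotomy s c with h | rfl | h
  · rw [if_pos h.le, if_neg h.ne, Nat.choose_eq_zero_of_lt (by omega), Nat.cast_zero]
  · simp
  · rw [if_neg (by omega), if_neg h.ne']

lemma binomToeplitz_succ (n s c : ℕ) :
    binomToeplitz (n + 1) s c = binomToeplitz n (s + 1) c + binomToeplitz n s c := by
  unfold binomToeplitz
  rcases lt_trichotomy s c with h | rfl | h
  · rw [if_pos h.le, if_pos (Nat.succ_le_of_lt h), if_pos h.le,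
      show c - s = c - (s + 1) + 1 by omega, Nat.choose_succ_succ, Nat.cast_add]
  · simp
  · rw [if_neg (by omega), if_neg (by omega), if_neg (by omega), add_zero]

variable {m : ℕ}

lemma det_binomMinor_zero_self {r : Fin m → ℕ} (hr : Injective r) :
    (binomMinor 0 r r).det = 1 := by
  rw [show binomMinor 0 r r = 1 by ext i j; simp [binomMinor, binomToeplitz_zero, one_apply,
    hr.eq_iff], det_one]

lemma det_binomMinor_zero_nonneg {r c : Fin m → ℕ} (hr : StrictMono r) (hc : StrictMono c) :
    0 ≤ (binomMinor 0 r c).det := by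
  by_cases hcr : ∀ j, c j ∈ univ.image r
  · have hcard : (univ.image r).card = m := by
      rw [card_image_of_injective _ hr.injective, card_univ, Fintype.card_fin]
    obtain rfl : c = r := (orderEmbOfFin_unique hcard hcr hc).trans
      (orderEmbOfFin_unique hcard (fun i => mem_image_of_mem r (mem_univ i)) hr).symm
    rw [det_binomMinor_zero_self hr.injective]
    exact zero_le_one
  · push Not at hcr
    obtain ⟨j, hj⟩ := hcr
    rw [det_eq_zero_of_column_eq_zero j fun i => by
      simp_all [binomMinor, binomToeplitz_zero]]

lemma det_binomMinor_succ (n : ℕ) (r c : Fin m → ℕ) :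
    (binomMinor (n + 1) r c).det =
      ∑ t : Finset (Fin m), (binomMinor n (t.piecewise (fun i => r i + 1) r) c).det := by
  have hsplit :
      binomMinor (n + 1) r c = binomMinor n (fun i => r i + 1) c + binomMinor n r c := by
    ext i j
    exact binomToeplitz_succ n (r i) (c j)
  rw [hsplit]
  refine ((detRowAlternating : (Fin m → ℤ) [⋀^Fin m]→ₗ[ℤ] ℤ).map_add_univ _ _).trans
    (sum_congr rfl fun t _ => congr_arg det ?_)
  ext i j
  by_cases hi : i ∈ t <;> simp [binomMinor, Finset.piecewise, hi]

lemma StrictMono.monotone_piecewise_add_one {r : Fin m → ℕ} (hr : StrictMono r)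
    (t : Finset (Fin m)) : Monotone (t.piecewise (fun i => r i + 1) r) := by
  intro a b hab
  rcases hab.lt_or_eq with h | rfl
  · have := hr h
    simp only [Finset.piecewise]
    split_ifs <;> omega
  · exact le_rfl

lemma strictMono_or_det_binomMinor_eq_zero {r : Fin m → ℕ} (hr : Monotone r) (n : ℕ)
    (c : Fin m → ℕ) : StrictMono r ∨ (binomMinor n r c).det = 0 := by
  by_cases hinj : Injective r
  · exact .inl (hr.strictMono_of_injective hinj)
  · obtain ⟨a, b, hab, hne⟩ : ∃ a b, r a = r b ∧ a ≠ b := by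
      simpa [Injective] using hinj
    exact .inr (det_zero_of_row_eq hne (by ext j; simp [binomMinor, hab]))

theorem det_binomMinor_nonneg (n : ℕ) {r c : Fin m → ℕ} (hr : StrictMono r)
    (hc : StrictMono c) : 0 ≤ (binomMinor n r c).det := by
  induction n generalizing r with
  | zero => exact det_binomMinor_zero_nonneg hr hc
  | succ n ih =>
    rw [det_binomMinor_succ]
    refine sum_nonneg fun t _ => ?_
    rcases strictMono_or_det_binomMinor_eq_zero (hr.monotone_piecewise_add_one t) n c with h | h
    · exact ih h
    · exact h.ge

theorem det_binomMinor_pos (n : ℕ) {r c : Fin m → ℕ} (hr : StrictMono r) (hc : StrictMono c)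
    (hdiag : ∀ i, r i ≤ c i ∧ c i ≤ r i + n) : 0 < (binomMinor n r c).det := by
  induction n generalizing r with
  | zero =>
    obtain rfl : c = r := funext fun i => by have := hdiag i; omega
    rw [det_binomMinor_zero_self hr.injective]
    exact one_pos
  | succ n ih =>
    rw [det_binomMinor_succ]
    set t := univ.filter fun i => r i < c i
    have ht : ∀ i, t.piecewise (fun i => r i + 1) r i = if r i < c i then r i + 1 else r i :=
      fun i => by simp [t, Finset.piecewise]
    refine sum_pos' (fun u _ => ?_) ⟨t, mem_univ _, ih ?_ ?_⟩
    · rcases strictMono_or_det_binomMinor_eq_zero (hr.monotone_piecewise_add_one u) n c with h | h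
      · exact det_binomMinor_nonneg n h hc
      · exact h.ge
    · intro a b hab
      have := hr hab
      have := hc hab
      have := hdiag a
      have := hdiag b
      simp only [ht]
      split_ifs <;> omega
    · intro i
      have := hdiag i
      simp only [ht]
      split_ifs <;> omega

theorem Fin.sign_revPerm : ∀ n : ℕ,
    Perm.sign (Fin.revPerm : Perm (Fin (n + 1))) = (-1) ^ (n * (n + 1) / 2)
  | 0 => by simp [Subsingleton.elim (Fin.revPerm : Perm (Fin 1)) 1]
  | n + 1 => by
    set E : Perm (Fin (n + 2)) := finSuccEquivLast.symm.permCongr (optionCongr Fin.revPerm)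
    have hdecomp : (Fin.revPerm : Perm (Fin (n + 2))) = finRotate (n + 2) * E := by
      ext i
      refine Fin.lastCases ?_ (fun k => ?_) i
      · simp only [Perm.mul_apply, E, permCongr_apply, symm_symm, finSuccEquivLast_last,
          optionCongr_apply, Option.map_none, finSuccEquivLast_symm_none, finRotate_apply,
          Fin.revPerm_apply, Fin.rev_last, Fin.last_add_one]
      · simp only [Perm.mul_apply, E, permCongr_apply, symm_symm, finSuccEquivLast_castSucc,
          optionCongr_apply, Option.map_some, finSuccEquivLast_symm_some, finRotate_apply,
          Fin.revPerm_apply, Fin.coeSucc_eq_succ, Fin.rev_castSucc]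
    rw [hdecomp, map_mul, sign_finRotate, Perm.sign_permCongr, optionCongr_sign,
      Fin.sign_revPerm n, ← pow_add,
      show (n + 1) * (n + 1 + 1) = n * (n + 1) + 2 * (n + 1) by ring,
      Nat.add_mul_div_left _ _ two_pos, Nat.add_sub_cancel, add_comm]

/-- For `q ≤ r₁ ≤ r₂`, the `(q+1)×(q+1)` matrix with entries
`a_{ij} = binom(r₁+r₂-2q, r₁-i-j)` (zero when `i+j > r₁`, matching the convention
`binom(n,k) = 0` for `k < 0`) has determinant of sign `(-1)^{q(q+1)/2}`. -/
theorem binomial_matrix_det_sign (q r₁ r₂ : ℕ) (h₁ : q ≤ r₁) (h₂ : r₁ ≤ r₂) :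
    0 < (-1 : ℤ) ^ (q * (q + 1) / 2) *
      (Matrix.of fun i j : Fin (q + 1) =>
        if (i : ℕ) + (j : ℕ) ≤ r₁
        then ((r₁ + r₂ - 2 * q).choose (r₁ - (i : ℕ) - (j : ℕ)) : ℤ)
        else 0).det := by
  set A : Matrix (Fin (q + 1)) (Fin (q + 1)) ℤ := Matrix.of fun i j =>
    if (i : ℕ) + (j : ℕ) ≤ r₁ then ((r₁ + r₂ - 2 * q).choose (r₁ - (i : ℕ) - (j : ℕ)) : ℤ) else 0
  have hrev : A.submatrix id Fin.revPerm =
      binomMinor (r₁ + r₂ - 2 * q) (fun i => i) (fun j => r₁ - q + j) := by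
    ext i j
    have hj := j.is_le
    simp only [A, binomMinor, binomToeplitz, submatrix_apply, of_apply, id, Fin.revPerm_apply,
      Fin.val_rev]
    by_cases h : (i : ℕ) ≤ r₁ - q + j
    · rw [if_pos (by omega), if_pos h, show r₁ - i - (q + 1 - (j + 1)) = r₁ - q + j - i by omega]
    · rw [if_neg (by omega), if_neg h]
  have hpos := det_binomMinor_pos (r₁ + r₂ - 2 * q) (r := fun i : Fin (q + 1) => (i : ℕ))
    (c := fun j => r₁ - q + j) Fin.val_strictMono
    (fun a b hab => by simp only; omega) (fun i => ⟨by omega, by omega⟩)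
  rwa [← hrev, det_permute', Fin.sign_revPerm, Units.val_pow_eq_pow_val, Units.coe_neg_one]
    at hpos
end

section
/- Let R* be a Poincaré duality algebra of dimension r ≥ 2 satisfying HR(ℓ_2) for some ℓ_2 ∈ R^1. Then for any ℓ_1 ∈ R^1: deg(ℓ_1² ℓ_2^{r−2}) · deg(ℓ_2^r) ≤ deg(ℓ_1 ℓ_2^{r−1})², with strict inequality when ℓ_1 is not a scalar multiple of ℓ_2 and deg(ℓ_2^r) > 0. -/
open Module

/-! `HR(ℓ₂)` in degree `0` gives `D = deg (ℓ₂ ^ r) > 0`. For `c = deg (ℓ₁ ℓ₂ ^ (r - 1)) / D` the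
class `ℓ₁ - c ℓ₂ ∈ R 1` is primitive, since `deg (ℓ₂ ^ (r - 1) (ℓ₁ - c ℓ₂)) = 0` and `deg` is
injective on `R r`; so `HR(ℓ₂)` in degree `1` makes `deg ((ℓ₁ - c ℓ₂) ^ 2 ℓ₂ ^ (r - 2))` negative
unless `ℓ₁ = c ℓ₂`. Completing the square, `D` times this number is exactly
`deg (ℓ₁ ^ 2 ℓ₂ ^ (r - 2)) D - deg (ℓ₁ ℓ₂ ^ (r - 1)) ^ 2`. -/

section HodgeRiemann

variable {A : Type*} [CommRing A] [Algebra ℝ A] {R : ℕ → Submodule ℝ A} {r : ℕ}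

theorem IsPDAlgebra.nontrivial (hPD : IsPDAlgebra R r) : Nontrivial A :=
  have : Nontrivial (R 0) := Module.nontrivial_of_finrank_eq_succ hPD.1
  (Subtype.coe_injective (p := (· ∈ R 0))).nontrivial

variable [SetLike.GradedMonoid R]

theorem IsPDAlgebra.pow_succ_eq_zero (hPD : IsPDAlgebra R r) {ℓ : A} (hℓ : ℓ ∈ R 1) :
    ℓ ^ (r + 1) = 0 := by
  have hmem : ℓ ^ (r + 1) ∈ R (r + 1) := by simpa using SetLike.pow_mem_graded (r + 1) hℓ
  simpa [hPD.2.2.1 (r + 1) r.lt_succ_self] using hmem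

theorem HodgeRiemann.deg_pow_pos {deg : A →ₗ[ℝ] ℝ} {ℓ : A} (hHR : HodgeRiemann R r deg ℓ)
    (hPD : IsPDAlgebra R r) (hℓ : ℓ ∈ R 1) : 0 < deg (ℓ ^ r) := by
  have := hPD.nontrivial
  simpa using hHR 0 (Nat.zero_le _) 1 SetLike.GradedOne.one_mem one_ne_zero
    (by simpa using hPD.pow_succ_eq_zero hℓ)

theorem HodgeRiemann.deg_sq_mul_pow_neg {n : ℕ} {deg : A →ₗ[ℝ] ℝ} {ℓ a : A}
    (hHR : HodgeRiemann R (n + 2) deg ℓ) (hdeg : IsDegreeMap R (n + 2) deg) (hℓ : ℓ ∈ R 1)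
    (ha : a ∈ R 1) (ha0 : a ≠ 0) (hperp : deg (ℓ ^ (n + 1) * a) = 0) :
    deg (a ^ 2 * ℓ ^ n) < 0 := by
  have hmem : ℓ ^ (n + 1) * a ∈ R (n + 2) := by
    simpa using SetLike.mul_mem_graded (SetLike.pow_mem_graded (n + 1) hℓ) ha
  have hprim : ℓ ^ (n + 1) * a = 0 := hdeg.1 _ hmem hperp
  have hQ := hHR 1 (by omega) a ha ha0 (by simpa using hprim)
  have hpow : a * (ℓ ^ n * a) = a ^ 2 * ℓ ^ n := by ring
  simpa [hpow] using hQ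

end HodgeRiemann

section Expansion

variable {A : Type*} [CommRing A] [Algebra ℝ A] (deg : A →ₗ[ℝ] ℝ) (x y : A) (c : ℝ) (n : ℕ)

theorem deg_pow_mul_sub_smul :
    deg (y ^ (n + 1) * (x - c • y)) = deg (x * y ^ (n + 1)) - c * deg (y ^ (n + 2)) := by
  have : y ^ (n + 1) * (x - c • y) = x * y ^ (n + 1) - c • y ^ (n + 2) := by
    rw [mul_sub, mul_smul_comm, ← pow_succ, mul_comm]
  rw [this, map_sub, map_smul, smul_eq_mul]

theorem deg_sub_smul_sq_mul_pow :
    deg ((x - c • y) ^ 2 * y ^ n) =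
      deg (x ^ 2 * y ^ n) - 2 * c * deg (x * y ^ (n + 1)) + c ^ 2 * deg (y ^ (n + 2)) := by
  have : (x - c • y) ^ 2 * y ^ n =
      x ^ 2 * y ^ n - (2 * c) • (x * y ^ (n + 1)) + c ^ 2 • y ^ (n + 2) := by
    simp only [Algebra.smul_def, map_mul, map_pow, map_ofNat]
    ring
  rw [this, map_add, map_sub, map_smul, map_smul, smul_eq_mul, smul_eq_mul]

/-- Completing the square at the critical point of `t ↦ deg ((x - t • y) ^ 2 * y ^ n)`. -/
theorem deg_sub_smul_sq_mul_pow_mul_eq (hD : deg (y ^ (n + 2)) ≠ 0) :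
    deg ((x - (deg (x * y ^ (n + 1)) / deg (y ^ (n + 2))) • y) ^ 2 * y ^ n) * deg (y ^ (n + 2)) =
      deg (x ^ 2 * y ^ n) * deg (y ^ (n + 2)) - deg (x * y ^ (n + 1)) ^ 2 := by
  rw [deg_sub_smul_sq_mul_pow]
  field_simp
  ring

end Expansion

theorem khovanskii_teissier_general {A : Type*} [CommRing A] [Algebra ℝ A]
    (R : ℕ → Submodule ℝ A) [GradedAlgebra R] (r : ℕ)
    (hr : 2 ≤ r) (hPD : IsPDAlgebra R r) (deg : A →ₗ[ℝ] ℝ) (hdeg : IsDegreeMap R r deg)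
    (ℓ₁ ℓ₂ : A) (h₁ : ℓ₁ ∈ R 1) (h₂ : ℓ₂ ∈ R 1)
    (hHR : HodgeRiemann R r deg ℓ₂) :
    deg (ℓ₁ ^ 2 * ℓ₂ ^ (r - 2)) * deg (ℓ₂ ^ r) ≤ deg (ℓ₁ * ℓ₂ ^ (r - 1)) ^ 2 ∧
    ((∀ c : ℝ, ℓ₁ ≠ c • ℓ₂) → 0 < deg (ℓ₂ ^ r) →
      deg (ℓ₁ ^ 2 * ℓ₂ ^ (r - 2)) * deg (ℓ₂ ^ r) < deg (ℓ₁ * ℓ₂ ^ (r - 1)) ^ 2) := by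
  obtain ⟨n, rfl⟩ := Nat.exists_eq_add_of_le' hr
  simp only [Nat.add_sub_cancel, show n + 2 - 1 = n + 1 by omega]
  have hD := hHR.deg_pow_pos hPD h₂
  set c := deg (ℓ₁ * ℓ₂ ^ (n + 1)) / deg (ℓ₂ ^ (n + 2))
  have hdisc := deg_sub_smul_sq_mul_pow_mul_eq deg ℓ₁ ℓ₂ n hD.ne'
  have strict (hne : ℓ₁ - c • ℓ₂ ≠ 0) :
      deg (ℓ₁ ^ 2 * ℓ₂ ^ n) * deg (ℓ₂ ^ (n + 2)) < deg (ℓ₁ * ℓ₂ ^ (n + 1)) ^ 2 := by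
    have hperp : deg (ℓ₂ ^ (n + 1) * (ℓ₁ - c • ℓ₂)) = 0 := by
      rw [deg_pow_mul_sub_smul, div_mul_cancel₀ _ hD.ne', sub_self]
    have hneg := hHR.deg_sq_mul_pow_neg hdeg h₂
      (sub_mem h₁ (Submodule.smul_mem _ c h₂)) hne hperp
    linarith [mul_neg_of_neg_of_pos hneg hD]
  refine ⟨?_, fun hne _ => strict (sub_ne_zero.mpr (hne c))⟩
  rcases eq_or_ne (ℓ₁ - c • ℓ₂) 0 with hzero | hne
  · rw [hzero, zero_pow two_ne_zero, zero_mul, map_zero, zero_mul] at hdisc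
    linarith
  · exact (strict hne).le

/-- Khovanskii–Teissier type inequality. Let `R*` be a Poincaré duality
algebra of dimension `r ≥ 2` satisfying `HR(ℓ₂)` for some `ℓ₂ ∈ R^1`.  Then for any
`ℓ₁ ∈ R^1`, `deg(ℓ₁² ℓ₂^{r-2}) · deg(ℓ₂^r) ≤ deg(ℓ₁ ℓ₂^{r-1})²`, with strict inequality
when `ℓ₁` is not a scalar multiple of `ℓ₂` and `deg(ℓ₂^r) > 0`. -/
theorem khovanskii_teissier {A : Type*} [CommRing A] [Algebra ℝ A]
    [FiniteDimensional ℝ A] (R : ℕ → Submodule ℝ A) [GradedAlgebra R] (r : ℕ)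
    (hr : 2 ≤ r) (hPD : IsPDAlgebra R r) (deg : A →ₗ[ℝ] ℝ) (hdeg : IsDegreeMap R r deg)
    (ℓ₁ ℓ₂ : A) (h₁ : ℓ₁ ∈ R 1) (h₂ : ℓ₂ ∈ R 1)
    (hHR : HodgeRiemann R r deg ℓ₂) :
    deg (ℓ₁ ^ 2 * ℓ₂ ^ (r - 2)) * deg (ℓ₂ ^ r) ≤ deg (ℓ₁ * ℓ₂ ^ (r - 1)) ^ 2 ∧
    ((∀ c : ℝ, ℓ₁ ≠ c • ℓ₂) → 0 < deg (ℓ₂ ^ r) →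
      deg (ℓ₁ ^ 2 * ℓ₂ ^ (r - 2)) * deg (ℓ₂ ^ r) < deg (ℓ₁ * ℓ₂ ^ (r - 1)) ^ 2) :=
  khovanskii_teissier_general R r hr hPD deg hdeg ℓ₁ ℓ₂ h₁ h₂ hHR
end
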